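/- arXiv:1304.5044 — 7 statements merged into one kernel-verified Lean document; each statement's English description precedes it below -/
import Mathlib

section
/- The sequence of coefficients $p_0(\ell,m), p_1(\ell,m), \dots, p_{\ell m}(\ell,m)$ of the Gaussian binomial coefficient $\binom{m+\ell}{m}_q$ is unimodal: there exists $k$ such that $p_0 \le p_1 \le \dots \le p_k \ge p_{k+1} \ge \dots \ge p_{\ell m}$. -/
/-!
Proctor's proof. Encode a partition in the `ℓ × m` box as the `ℓ`-subset of `{0, …, ℓ + m - 1}`
whose element sum exceeds `|λ|` by `ℓ.choose 2`; reflecting `a ↦ ℓ + m - 1 - a` gives the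
symmetry. On subsets of `{0, …, M}`, let `U` move one element `i` to `i + 1` with weight
`√((i + 1) (M - i))`. Then `U Uᵀ - Uᵀ U` is diagonal with entry `|s| M - 2 Σ s` at `s`, which is
positive below the middle level, so `‖Uᵀ x‖² ≥ Σ (|s| M - 2 Σ s) x_s² > 0` for `x ≠ 0` supported
there: `Uᵀ` is injective from each level below the middle into the next one.
-/

/-- `pCount ℓ m n` is the number of partitions of `n` fitting inside an `ℓ × m` rectangle,
i.e. the coefficient of `q^n` in the Gaussian binomial coefficient `(m+ℓ choose m)_q`. -/
def pCount (ℓ m n : ℕ) : ℕ :=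
  Fintype.card {p : n.Partition // p.parts.card ≤ ℓ ∧ ∀ i ∈ p.parts, i ≤ m}

open Finset Matrix
open scoped symmDiff

namespace Matrix

variable {ι : Type*} [Fintype ι] [DecidableEq ι]

theorem sum_mul_sq_nonpos_of_transpose_mulVec_eq_zero {A : Matrix ι ι ℝ} {d : ι → ℝ}
    (hA : A * Aᵀ - Aᵀ * A = diagonal d) {y : ι → ℝ} (hy : Aᵀ *ᵥ y = 0) :
    ∑ i, d i * y i ^ 2 ≤ 0 := by
  have hd : diagonal d *ᵥ y = -((Aᵀ * A) *ᵥ y) := by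
    rw [← hA, sub_mulVec, ← mulVec_mulVec, hy, mulVec_zero, zero_sub]
  calc ∑ i, d i * y i ^ 2 = y ⬝ᵥ (diagonal d *ᵥ y) := by
        simp only [dotProduct, mulVec_diagonal]; congr! 1 with i; ring
    _ = -((A *ᵥ y) ⬝ᵥ (A *ᵥ y)) := by
        rw [hd, dotProduct_neg, ← mulVec_mulVec, dotProduct_mulVec, vecMul_transpose]
    _ ≤ 0 := neg_nonpos.mpr (dotProduct_self_star_nonneg _)

theorem card_le_card_of_commutator_eq_diagonal {A : Matrix ι ι ℝ} {d : ι → ℝ}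
    (hA : A * Aᵀ - Aᵀ * A = diagonal d) {S T : Finset ι} (hd : ∀ s ∈ S, 0 < d s)
    (hST : ∀ s ∈ S, ∀ t ∉ T, A s t = 0) : #S ≤ #T := by
  let B : Matrix T S ℝ := Aᵀ.submatrix (↑) (↑)
  suffices Function.Injective B.mulVecLin by
    simpa using LinearMap.finrank_le_finrank_of_injective this
  refine (injective_iff_map_eq_zero _).mpr fun x hx => ?_
  let y : ι → ℝ := fun i => if h : i ∈ S then x ⟨i, h⟩ else 0
  have hy : Aᵀ *ᵥ y = 0 := by
    funext t
    have hsum : (Aᵀ *ᵥ y) t = ∑ s : S, A s t * x s := by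
      rw [mulVec, dotProduct, ← sum_subset (subset_univ S) fun i _ hi => by simp [y, hi],
        ← sum_coe_sort S]
      simp [y]
    rw [hsum, Pi.zero_apply]
    by_cases ht : t ∈ T
    · simpa [B, mulVec, dotProduct, sum_coe_sort] using congrFun hx ⟨t, ht⟩
    · simp [hST _ _ _ ht]
  have hnonneg : ∀ i ∈ univ, 0 ≤ d i * y i ^ 2 := by
    intro i _
    by_cases hi : i ∈ S
    · exact mul_nonneg (hd i hi).le (sq_nonneg _)
    · simp [y, hi]
  have hzero := (sum_eq_zero_iff_of_nonneg hnonneg).mp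
    ((sum_mul_sq_nonpos_of_transpose_mulVec_eq_zero hA hy).antisymm (sum_nonneg hnonneg))
  funext s
  have := hzero s (mem_univ _)
  simpa [y, (hd s s.2).ne'] using this

end Matrix

theorem exists_unimodal_of_symm_of_le_succ {α : Type*} [Preorder α] {f : ℕ → α} {N : ℕ}
    (hsymm : ∀ k ≤ N, f (N - k) = f k) (hstep : ∀ k, 2 * k < N → f k ≤ f (k + 1)) :
    ∃ K ≤ N, (∀ i j, i ≤ j → j ≤ K → f i ≤ f j) ∧
      (∀ i j, K ≤ i → i ≤ j → j ≤ N → f j ≤ f i) := by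
  have hmono : MonotoneOn f (Set.Iic ((N + 1) / 2)) :=
    monotoneOn_of_le_add_one Set.ordConnected_Iic fun k _ _ hk =>
      hstep k (by rw [Set.mem_Iic] at hk; omega)
  refine ⟨(N + 1) / 2, by omega, fun i j hij hj => hmono (by simp; omega) (by simp; omega) hij,
    fun i j hi hij hj => ?_⟩
  rw [← hsymm j hj, ← hsymm i (hij.trans hj)]
  exact hmono (by simp; omega) (by simp; omega) (by omega)

theorem Nat.two_mul_choose_two_add_mul (ℓ m : ℕ) : 2 * ℓ.choose 2 + ℓ * m = ℓ * (ℓ + m - 1) := by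
  have h := sum_range_id_mul_two ℓ
  rw [sum_range_id, ← Nat.choose_two_right] at h
  rcases ℓ with _ | ℓ
  · simp
  · rw [mul_comm, h, show ℓ + 1 + m - 1 = ℓ + m by omega, Nat.add_sub_cancel]
    ring

theorem pCount_of_mul_eq_zero {ℓ m : ℕ} (h : ℓ * m = 0) (k : ℕ) :
    pCount ℓ m k = if k = 0 then 1 else 0 := by
  have hbox (p : k.Partition) : (p.parts.card ≤ ℓ ∧ ∀ i ∈ p.parts, i ≤ m) ↔ p.parts = 0 := by
    refine ⟨fun ⟨hcard, hle⟩ => ?_, fun hp => by simp [hp]⟩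
    rcases Nat.mul_eq_zero.mp h with rfl | rfl
    · exact Multiset.card_eq_zero.mp (Nat.le_zero.mp hcard)
    · exact Multiset.eq_zero_of_forall_notMem fun i hi =>
        (p.parts_pos hi).ne' (Nat.le_zero.mp (hle i hi))
  rw [pCount, Fintype.card_congr (Equiv.subtypeEquivRight hbox)]
  split_ifs with hk
  · subst hk
    simp
  · refine Fintype.card_eq_zero_iff.mpr ⟨fun ⟨p, hp⟩ => hk ?_⟩
    rw [← p.parts_sum, hp, Multiset.sum_zero]

theorem pCount_succ_succ (ℓ m k : ℕ) :
    pCount (ℓ + 1) (m + 1) k =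
      pCount (ℓ + 1) m k + if m + 1 ≤ k then pCount ℓ (m + 1) (k - (m + 1)) else 0 := by
  have hsplit (p : k.Partition) : (p.parts.card ≤ ℓ + 1 ∧ ∀ i ∈ p.parts, i ≤ m + 1) ↔
      (p.parts.card ≤ ℓ + 1 ∧ ∀ i ∈ p.parts, i ≤ m) ∨
        (m + 1 ∈ p.parts ∧ p.parts.card ≤ ℓ + 1 ∧ ∀ i ∈ p.parts, i ≤ m + 1) := by grind
  rw [pCount, Fintype.card_congr (Equiv.subtypeEquivRight hsplit),
    Fintype.card_subtype_or_disjoint _ _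
      (Pi.disjoint_iff.mpr fun p => Prop.disjoint_iff.mpr (by grind))]
  congr 1
  split_ifs with hk
  · refine Fintype.card_congr ((Equiv.subtypeSubtypeEquivSubtypeInter _ _).symm.trans
      ((Nat.Partition.partitionWithPartEquiv (by omega) hk).subtypeEquiv fun p => ?_))
    rw [Nat.Partition.partitionWithPartEquiv_apply_parts]
    conv_lhs => rw [← Multiset.cons_erase p.2]
    simp
  · exact Fintype.card_eq_zero_iff.mpr ⟨fun p => hk (Nat.Partition.le_of_mem_parts p.2.1)⟩

namespace Sylvester

def sumLevel (N L n : ℕ) : Finset (Finset (Fin N)) := {s | #s = L ∧ ∑ a ∈ s, (a : ℕ) = n}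

@[simp] theorem mem_sumLevel {N L n : ℕ} {s : Finset (Fin N)} :
    s ∈ sumLevel N L n ↔ #s = L ∧ ∑ a ∈ s, (a : ℕ) = n := by
  simp [sumLevel]

theorem choose_two_card_le_sum_val {N : ℕ} (s : Finset (Fin N)) :
    (#s).choose 2 ≤ ∑ a ∈ s, (a : ℕ) := by
  induction s using Finset.induction_on_max with
  | empty => simp
  | insert a s has ih =>
    have ha : a ∉ s := fun h => lt_irrefl a (has a h)
    have hcard : #s ≤ a := by
      simpa using card_le_card fun b hb => mem_Iio.mpr (has b hb)
    have hchoose : (#s + 1).choose 2 = #s + (#s).choose 2 := by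
      simp [Nat.choose_succ_succ']
    rw [card_insert_of_notMem ha, sum_insert ha, hchoose]
    omega

theorem sumLevel_eq_empty_of_lt_choose_two {N L n : ℕ} (h : n < L.choose 2) : sumLevel N L n = ∅ :=
  eq_empty_of_forall_notMem fun s hs => by
    obtain ⟨rfl, rfl⟩ := mem_sumLevel.mp hs
    exact h.not_ge (choose_two_card_le_sum_val s)

theorem sumLevel_zero (N n : ℕ) : sumLevel N 0 n = if n = 0 then {∅} else ∅ := by
  ext s
  rw [mem_sumLevel, card_eq_zero]
  split_ifs with h <;> constructor <;> grind

theorem sumLevel_self (N n : ℕ) : sumLevel N N n = if n = N.choose 2 then {univ} else ∅ := by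
  have hsum : ∑ a : Fin N, (a : ℕ) = N.choose 2 := by
    rw [Fin.sum_univ_eq_sum_range (fun a => a), sum_range_id, Nat.choose_two_right]
  ext s
  rw [mem_sumLevel, show #s = N ↔ s = univ by simpa using card_eq_iff_eq_univ s]
  split_ifs with h <;> constructor <;> grind

theorem exists_map_castSuccEmb_eq {N : ℕ} {s : Finset (Fin (N + 1))} (h : Fin.last N ∉ s) :
    ∃ t : Finset (Fin N), t.map Fin.castSuccEmb = s := by
  have : s ⊆ univ.map Fin.castSuccEmb := by
    rw [← Fin.Iio_last_eq_map]
    exact fun a ha => mem_Iio.mpr (Fin.lt_last_iff_ne_last.mpr fun e => h (e ▸ ha))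
  obtain ⟨t, -, rfl⟩ := subset_map_iff.mp this
  exact ⟨t, rfl⟩

theorem card_filter_last_notMem_sumLevel (N L n : ℕ) :
    #{s ∈ sumLevel (N + 1) L n | Fin.last N ∉ s} = #(sumLevel N L n) := by
  symm
  refine card_nbij (·.map Fin.castSuccEmb) (fun t ht => ?_) (Finset.map_injective _).injOn
    fun s hs => ?_
  · simpa using ht
  · obtain ⟨hs, hlast⟩ := mem_filter.mp hs
    obtain ⟨t, rfl⟩ := exists_map_castSuccEmb_eq hlast
    exact ⟨t, by simpa using hs, rfl⟩

theorem card_filter_last_mem_sumLevel (N L n : ℕ) :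
    #{s ∈ sumLevel (N + 1) (L + 1) n | Fin.last N ∈ s} =
      if N ≤ n then #(sumLevel N L (n - N)) else 0 := by
  rw [← card_empty (α := Finset (Fin N)), ← apply_ite, ← filter_const]
  symm
  refine card_nbij (fun t => insert (Fin.last N) (t.map Fin.castSuccEmb)) (fun t ht => ?_)
    (fun _ _ _ _ h => ?_) fun s hs => ?_
  · rw [mem_coe, mem_filter, mem_sumLevel] at ht
    obtain ⟨⟨rfl, hsum⟩, hn⟩ := ht
    simp [card_insert_of_notMem, sum_insert, hsum]
    omega
  · have := congrArg (·.erase (Fin.last N)) h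
    simpa [erase_insert] using this
  · obtain ⟨hs, hlast⟩ := mem_filter.mp hs
    obtain ⟨t, ht⟩ := exists_map_castSuccEmb_eq (notMem_erase (Fin.last N) s)
    refine ⟨t, ?_, show insert _ _ = s by rw [ht, insert_erase hlast]⟩
    rw [mem_sumLevel] at hs
    have hcard := congrArg card ht
    have hsum := congrArg (fun u : Finset (Fin (N + 1)) => ∑ a ∈ u, (a : ℕ)) ht
    have := add_sum_erase s (fun a => (a : ℕ)) hlast
    simp only [card_map, card_erase_of_mem hlast, sum_map, Fin.coe_castSuccEmb, Fin.val_castSucc,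
      Fin.val_last] at hcard hsum this
    simp only [coe_filter, mem_sumLevel, Set.mem_ofPred_eq]
    omega

theorem card_sumLevel_succ_succ (N L n : ℕ) :
    #(sumLevel (N + 1) (L + 1) n) =
      #(sumLevel N (L + 1) n) + if N ≤ n then #(sumLevel N L (n - N)) else 0 := by
  rw [← card_filter_add_card_filter_not (p := (Fin.last N ∈ ·)), card_filter_last_mem_sumLevel,
    card_filter_last_notMem_sumLevel, add_comm]

theorem sum_val_rev_add_sum_val {N : ℕ} (s : Finset (Fin N)) :
    ∑ a ∈ s, (a.rev : ℕ) + ∑ a ∈ s, (a : ℕ) = #s * (N - 1) := by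
  rw [← sum_add_distrib, ← smul_eq_mul, ← sum_const]
  exact sum_congr rfl fun a _ => by rw [Fin.val_rev]; omega

theorem map_rev_mem_sumLevel {N L k : ℕ} {s : Finset (Fin N)} (hs : s ∈ sumLevel N L k) :
    s.map Fin.revPerm.toEmbedding ∈ sumLevel N L (L * (N - 1) - k) := by
  have := sum_val_rev_add_sum_val s
  obtain ⟨rfl, rfl⟩ := mem_sumLevel.mp hs
  simp only [mem_sumLevel, card_map, sum_map, Equiv.coe_toEmbedding, Fin.revPerm_apply, true_and]
  omega

theorem card_sumLevel_symm {N L n : ℕ} (h : n ≤ L * (N - 1)) :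
    #(sumLevel N L (L * (N - 1) - n)) = #(sumLevel N L n) := by
  refine card_nbij' (·.map Fin.revPerm.toEmbedding) (·.map Fin.revPerm.toEmbedding)
    (fun s hs => ?_) (fun _ hs => map_rev_mem_sumLevel hs) (fun _ _ => ?_) (fun _ _ => ?_)
  · simpa [Nat.sub_sub_self h] using map_rev_mem_sumLevel hs
  all_goals ext; simp

variable {M : ℕ}

def hop (i : Fin M) (s : Finset (Fin (M + 1))) : Finset (Fin (M + 1)) :=
  s ∆ {i.castSucc, i.succ}

def CanHop (i : Fin M) (s : Finset (Fin (M + 1))) : Prop :=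
  i.castSucc ∈ s ∧ i.succ ∉ s

instance (i : Fin M) (s : Finset (Fin (M + 1))) : Decidable (CanHop i s) :=
  inferInstanceAs (Decidable (_ ∧ _))

@[simp] theorem hop_hop (i : Fin M) (s : Finset (Fin (M + 1))) : hop i (hop i s) = s :=
  symmDiff_symmDiff_cancel_right _ _

theorem hop_comm (i j : Fin M) (s : Finset (Fin (M + 1))) :
    hop i (hop j s) = hop j (hop i s) :=
  symmDiff_right_comm _ _ _

theorem hop_eq_iff {i : Fin M} {s t : Finset (Fin (M + 1))} : hop i s = t ↔ s = hop i t := by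
  constructor <;> rintro rfl <;> simp

theorem mem_hop {i : Fin M} {s : Finset (Fin (M + 1))} {a : Fin (M + 1)} :
    a ∈ hop i s ↔ (a ∈ s ↔ a ≠ i.castSucc ∧ a ≠ i.succ) := by
  simp only [hop, mem_symmDiff, mem_insert, mem_singleton]
  tauto

theorem canHop_hop {i : Fin M} {s : Finset (Fin (M + 1))} :
    CanHop i (hop i s) ↔ i.succ ∈ s ∧ i.castSucc ∉ s := by
  have : i.castSucc ≠ i.succ := Fin.castSucc_lt_succ.ne
  simp only [CanHop, mem_hop]
  grind

theorem canHop_and_canHop_hop_hop {i j : Fin M} (hij : i ≠ j) {s : Finset (Fin (M + 1))} :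
    CanHop i s ∧ CanHop j (hop j (hop i s)) ↔ CanHop j (hop j s) ∧ CanHop i (hop j s) := by
  rw [canHop_hop, canHop_hop]
  -- for adjacent `i` and `j`, two of the four positions involved coincide
  have e₁ : (i : ℕ) = j + 1 → j.succ = i.castSucc := fun h => Fin.ext (by simp [h])
  have e₂ : (j : ℕ) = i + 1 → i.succ = j.castSucc := fun h => Fin.ext (by simp [h])
  simp only [CanHop, mem_hop, ne_eq, Fin.ext_iff, Fin.val_castSucc, Fin.val_succ] at hij ⊢
  grind

theorem hop_eq_insert_erase {i : Fin M} {s : Finset (Fin (M + 1))} (h : CanHop i s) :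
    hop i s = insert i.succ (s.erase i.castSucc) := by
  have : i.castSucc ≠ i.succ := Fin.castSucc_lt_succ.ne
  ext a
  simp only [mem_hop, mem_insert, mem_erase, CanHop] at h ⊢
  grind

theorem hop_mem_sumLevel {i : Fin M} {L n : ℕ} {s : Finset (Fin (M + 1))} (h : CanHop i s)
    (hs : s ∈ sumLevel (M + 1) L n) : hop i s ∈ sumLevel (M + 1) L (n + 1) := by
  obtain ⟨rfl, rfl⟩ := mem_sumLevel.mp hs
  have h' : i.succ ∉ s.erase i.castSucc := fun h'' => h.2 (mem_of_mem_erase h'')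
  rw [hop_eq_insert_erase h, mem_sumLevel, card_insert_of_notMem h', sum_insert h',
    card_erase_of_mem h.1, Nat.sub_add_cancel (card_pos.mpr ⟨_, h.1⟩), ← add_sum_erase _ _ h.1]
  simp only [Fin.val_succ, Fin.val_castSucc, true_and]
  omega

-- Summation by parts, with `(a + 1) (M - a) - a (M + 1 - a) = M - 2 a`.
theorem sum_mul_indicator_castSucc_sub_succ (s : Finset (Fin (M + 1))) :
    ∑ i : Fin M, ((i : ℝ) + 1) * (M - i) *
      ((if i.castSucc ∈ s then 1 else 0) - (if i.succ ∈ s then 1 else 0)) =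
    ∑ a ∈ s, ((M : ℝ) - 2 * a) := by
  let f : Fin (M + 1) → ℝ := fun a => if a ∈ s then 1 else 0
  calc _ = ∑ i : Fin M, f i.castSucc * ((i.castSucc : ℝ) + 1) * (M - i.castSucc)
        - ∑ i : Fin M, f i.succ * (i.succ : ℝ) * (M + 1 - i.succ) := by
        rw [← sum_sub_distrib]
        refine sum_congr rfl fun i _ => ?_
        simp only [f, Fin.val_castSucc, Fin.val_succ]
        push_cast
        ring
    _ = ∑ a, f a * ((a : ℝ) + 1) * (M - a) - ∑ a, f a * (a : ℝ) * (M + 1 - a) := by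
        rw [Fin.sum_univ_castSucc, Fin.sum_univ_succ (f := fun a => f a * (a : ℝ) * (M + 1 - a))]
        simp
    _ = ∑ a, f a * ((M : ℝ) - 2 * a) := by
        rw [← sum_sub_distrib]
        exact sum_congr rfl fun a _ => by ring
    _ = _ := by simp [f]

variable (M) in
abbrev SubsetMatrix := Matrix (Finset (Fin (M + 1))) (Finset (Fin (M + 1))) ℝ

def hopMatrix (i : Fin M) : SubsetMatrix M :=
  of fun s t => if CanHop i s ∧ t = hop i s then 1 else 0

theorem hopMatrix_mul_transpose (i j : Fin M) :
    hopMatrix i * (hopMatrix j)ᵀ = of fun s s' =>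
      if (CanHop i s ∧ CanHop j (hop j (hop i s))) ∧ s' = hop j (hop i s) then 1 else 0 := by
  ext s s'
  simp only [mul_apply, transpose_apply, hopMatrix, of_apply, mul_ite, mul_one, mul_zero]
  rw [Fintype.sum_eq_single (hop i s) fun t ht => by grind]
  split_ifs <;> grind [hop_eq_iff]

theorem transpose_mul_hopMatrix (i j : Fin M) :
    (hopMatrix j)ᵀ * hopMatrix i = of fun s s' =>
      if (CanHop j (hop j s) ∧ CanHop i (hop j s)) ∧ s' = hop i (hop j s) then 1 else 0 := by
  ext s s'
  simp only [mul_apply, transpose_apply, hopMatrix, of_apply, mul_ite, mul_one, mul_zero]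
  rw [Fintype.sum_eq_single (hop j s) fun r hr => by grind [hop_eq_iff]]
  split_ifs <;> grind [hop_eq_iff]

theorem hopMatrix_mul_transpose_comm {i j : Fin M} (hij : i ≠ j) :
    hopMatrix i * (hopMatrix j)ᵀ = (hopMatrix j)ᵀ * hopMatrix i := by
  rw [hopMatrix_mul_transpose, transpose_mul_hopMatrix]
  simp_rw [canHop_and_canHop_hop_hop hij, hop_comm j i]

theorem hopMatrix_commutator (i : Fin M) :
    hopMatrix i * (hopMatrix i)ᵀ - (hopMatrix i)ᵀ * hopMatrix i =
      diagonal fun s => (if i.castSucc ∈ s then 1 else 0) - (if i.succ ∈ s then 1 else 0) := by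
  ext s s'
  rw [hopMatrix_mul_transpose, transpose_mul_hopMatrix]
  simp only [Matrix.sub_apply, of_apply, hop_hop, diagonal_apply, canHop_hop, and_self]
  unfold CanHop
  split_ifs <;> grind

noncomputable def hopWeight (i : Fin M) : ℝ := √(((i : ℝ) + 1) * (M - i))

theorem hopWeight_mul_self (i : Fin M) : hopWeight i * hopWeight i = ((i : ℝ) + 1) * (M - i) :=
  Real.mul_self_sqrt (mul_nonneg (by positivity) (sub_nonneg.mpr (by exact_mod_cast i.is_lt.le)))

variable (M) in
noncomputable def upMatrix : SubsetMatrix M := ∑ i : Fin M, hopWeight i • hopMatrix i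

theorem upMatrix_commutator :
    upMatrix M * (upMatrix M)ᵀ - (upMatrix M)ᵀ * upMatrix M =
      diagonal fun s : Finset (Fin (M + 1)) => ∑ a ∈ s, ((M : ℝ) - 2 * (a : ℕ)) := by
  have hAAt : upMatrix M * (upMatrix M)ᵀ =
      ∑ i, ∑ j, (hopWeight i * hopWeight j) • (hopMatrix i * (hopMatrix j)ᵀ) := by
    simp only [upMatrix, transpose_sum, transpose_smul, Finset.sum_mul, Finset.mul_sum,
      smul_mul_smul_comm]
    exact sum_comm
  have hAtA : (upMatrix M)ᵀ * upMatrix M =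
      ∑ i, ∑ j, (hopWeight i * hopWeight j) • ((hopMatrix j)ᵀ * hopMatrix i) := by
    simp only [upMatrix, transpose_sum, transpose_smul, Finset.sum_mul, Finset.mul_sum,
      smul_mul_smul_comm]
    exact sum_congr rfl fun i _ => sum_congr rfl fun j _ => by rw [mul_comm (hopWeight j)]
  calc _ = ∑ i, (hopWeight i * hopWeight i) •
        (hopMatrix i * (hopMatrix i)ᵀ - (hopMatrix i)ᵀ * hopMatrix i) := by
        rw [hAAt, hAtA, ← sum_sub_distrib]
        refine sum_congr rfl fun i _ => ?_
        simp only [← sum_sub_distrib, ← smul_sub]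
        exact Fintype.sum_eq_single i fun j hj => by
          rw [hopMatrix_mul_transpose_comm (Ne.symm hj), sub_self, smul_zero]
    _ = _ := by
        ext s s'
        simp only [hopMatrix_commutator, hopWeight_mul_self, Matrix.sum_apply, Matrix.smul_apply,
          diagonal_apply]
        split_ifs
        · simp [sum_mul_indicator_castSucc_sub_succ]
        · simp

theorem sum_sub_two_mul_of_mem_sumLevel {L n : ℕ} {s : Finset (Fin (M + 1))}
    (hs : s ∈ sumLevel (M + 1) L n) : ∑ a ∈ s, ((M : ℝ) - 2 * (a : ℕ)) = L * M - 2 * n := by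
  obtain ⟨rfl, rfl⟩ := mem_sumLevel.mp hs
  simp [sum_sub_distrib, mul_sum]

theorem card_sumLevel_le_succ {L n : ℕ} (h : 2 * n < L * M) :
    #(sumLevel (M + 1) L n) ≤ #(sumLevel (M + 1) L (n + 1)) := by
  refine card_le_card_of_commutator_eq_diagonal upMatrix_commutator (fun s hs => ?_)
    fun s hs t ht => ?_
  · rw [sum_sub_two_mul_of_mem_sumLevel hs, sub_pos]
    exact_mod_cast h
  · rw [upMatrix, Matrix.sum_apply]
    refine Fintype.sum_eq_zero _ fun i => ?_
    have : ¬(CanHop i s ∧ t = hop i s) := fun ⟨hi, hti⟩ => ht (hti ▸ hop_mem_sumLevel hi hs)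
    simp [hopMatrix, this]

end Sylvester

open Sylvester

-- Both sides obey the `q`-Pascal recursion: split on whether the largest admissible part,
-- resp. element, occurs.
theorem pCount_eq_card_sumLevel (ℓ m k : ℕ) :
    pCount ℓ m k = #(sumLevel (ℓ + m) ℓ (k + ℓ.choose 2)) := by
  induction m generalizing ℓ k with
  | zero =>
    rw [pCount_of_mul_eq_zero (mul_zero ℓ), add_zero, sumLevel_self]
    split_ifs <;> simp_all
  | succ m ihm =>
    induction ℓ generalizing k with
    | zero =>
      rw [pCount_of_mul_eq_zero (zero_mul _), sumLevel_zero]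
      split_ifs <;> simp_all
    | succ ℓ ihl =>
      have hchoose : (ℓ + 1).choose 2 = ℓ.choose 2 + ℓ := by simp [Nat.choose_succ_succ', add_comm]
      rw [pCount_succ_succ, ihm, show ℓ + 1 + (m + 1) = ℓ + m + 1 + 1 by omega,
        card_sumLevel_succ_succ, show ℓ + 1 + m = ℓ + m + 1 by omega]
      congr 1
      split_ifs with hk hN hN
      · rw [ihl, show ℓ + (m + 1) = ℓ + m + 1 by omega]
        congr 2
        omega
      · omega
      · rw [sumLevel_eq_empty_of_lt_choose_two (by omega), card_empty]
      · rfl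

theorem pCount_symm {ℓ m k : ℕ} (hk : k ≤ ℓ * m) : pCount ℓ m (ℓ * m - k) = pCount ℓ m k := by
  have := Nat.two_mul_choose_two_add_mul ℓ m
  rw [pCount_eq_card_sumLevel, pCount_eq_card_sumLevel, ← card_sumLevel_symm (by omega)]
  congr 2
  omega

theorem pCount_le_succ {ℓ m k : ℕ} (hk : 2 * k < ℓ * m) : pCount ℓ m k ≤ pCount ℓ m (k + 1) := by
  have := Nat.two_mul_choose_two_add_mul ℓ m
  have hℓ : ℓ ≠ 0 := by rintro rfl; simp at hk
  obtain ⟨M, hM⟩ : ∃ M, ℓ + m = M + 1 := ⟨ℓ + m - 1, by omega⟩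
  rw [pCount_eq_card_sumLevel, pCount_eq_card_sumLevel, hM, add_right_comm]
  exact card_sumLevel_le_succ (by rw [hM, Nat.add_sub_cancel] at this; omega)

/-- Sylvester's theorem: the sequence `p_0(ℓ,m), …, p_{ℓm}(ℓ,m)` of coefficients of the
Gaussian binomial coefficient is unimodal. -/
theorem pCount_unimodal (ℓ m : ℕ) :
    ∃ k ≤ ℓ * m,
      (∀ i j, i ≤ j → j ≤ k → pCount ℓ m i ≤ pCount ℓ m j) ∧
      (∀ i j, k ≤ i → i ≤ j → j ≤ ℓ * m → pCount ℓ m j ≤ pCount ℓ m i) :=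
  exists_unimodal_of_symm_of_le_succ (fun _ hk => pCount_symm hk) fun _ hk => pCount_le_succ hk
end

section
/- The number of partitions of $n$ into odd distinct parts is weakly increasing from $n$ to $n+1$ for all $n \ge 3$: $q(n+1) \ge q(n)$, where $q(n)$ is the number of partitions of $n$ into distinct odd parts. -/
/-- `qOdd n` is the number of partitions of `n` into distinct odd parts. -/
def qOdd (n : ℕ) : ℕ :=
  Fintype.card {p : n.Partition // p.parts.Nodup ∧ ∀ i ∈ p.parts, Odd i}

/-!
If `1` is not a part, adjoining the part `1` gives a partition of `n + 1`. If `1` is a part,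
remove it and raise the largest part `m` by `2`; as `m + 2` exceeds every remaining part it is
the largest part of the image, so `m`, and with it the original partition, can be recovered.
The two images are told apart by whether they contain `1`. This needs a largest part other
than `1`, i.e. `n ≠ 1`.
-/

namespace Multiset

theorem sup_mem_of_ne_zero {α : Type*} [LinearOrder α] [OrderBot α] {s : Multiset α}
    (hs : s ≠ 0) : s.sup ∈ s := by
  induction s using Multiset.induction_on with
  | empty => exact absurd rfl hs
  | cons a s ih =>
    rw [sup_cons]
    rcases eq_or_ne s 0 with rfl | hs'
    · simp
    rcases max_choice a s.sup with h | h <;> simp [h, ih hs']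

theorem erase_ne_zero_of_ne_singleton {α : Type*} [DecidableEq α] {s : Multiset α} {a : α}
    (ha : a ∈ s) (hs : s ≠ {a}) : s.erase a ≠ 0 :=
  fun h => hs (by rw [← cons_erase ha, h]; rfl)

def raiseMax (s : Multiset ℕ) : Multiset ℕ :=
  (s.sup + 2) ::ₘ s.erase s.sup

variable {s : Multiset ℕ}

theorem mem_raiseMax {a : ℕ} : a ∈ raiseMax s ↔ a = s.sup + 2 ∨ a ∈ s.erase s.sup :=
  mem_cons

theorem sup_raiseMax (s : Multiset ℕ) : (raiseMax s).sup = s.sup + 2 := by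
  rw [raiseMax, sup_cons]
  exact sup_of_le_left (sup_le.2 fun a ha => (le_sup (mem_of_mem_erase ha)).trans (by omega))

theorem sum_raiseMax (s : Multiset ℕ) : (raiseMax s).sum = s.sum + 2 := by
  rcases eq_or_ne s 0 with rfl | hs
  · simp [raiseMax]
  conv_rhs => rw [← cons_erase (sup_mem_of_ne_zero hs)]
  rw [raiseMax, sum_cons, sum_cons]
  omega

theorem Nodup.raiseMax (hs : s.Nodup) : (raiseMax s).Nodup :=
  nodup_cons.2 ⟨fun h => by have := le_sup (mem_of_mem_erase h); omega, hs.erase _⟩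

theorem raiseMax_injOn : Set.InjOn raiseMax {s | s ≠ 0} := by
  intro s hs t ht hst
  have hsup : s.sup = t.sup := by
    have := congrArg Multiset.sup hst
    rwa [sup_raiseMax, sup_raiseMax, add_left_inj] at this
  have herase : s.erase s.sup = t.erase t.sup := by
    rw [raiseMax, raiseMax, hsup, cons_inj_right] at hst
    rwa [hsup]
  calc s = s.sup ::ₘ s.erase s.sup := (cons_erase (sup_mem_of_ne_zero hs)).symm
    _ = t.sup ::ₘ t.erase t.sup := by rw [herase, hsup]
    _ = t := cons_erase (sup_mem_of_ne_zero ht)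

theorem odd_of_mem_raiseMax (hs0 : s ≠ 0) (hs : ∀ a ∈ s, Odd a) : ∀ a ∈ raiseMax s, Odd a := by
  intro a ha
  rcases mem_raiseMax.1 ha with rfl | ha
  · exact (hs _ (sup_mem_of_ne_zero hs0)).add_even even_two
  · exact hs a (mem_of_mem_erase ha)

theorem one_notMem_raiseMax_erase_one (hs : s.Nodup) : 1 ∉ raiseMax (s.erase 1) := by
  intro h
  rcases mem_raiseMax.1 h with h | h
  · omega
  · exact hs.notMem_erase (mem_of_mem_erase h)

def addOneOrRaiseMax (s : Multiset ℕ) : Multiset ℕ :=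
  if 1 ∈ s then raiseMax (s.erase 1) else 1 ::ₘ s

theorem sum_addOneOrRaiseMax (s : Multiset ℕ) : (addOneOrRaiseMax s).sum = s.sum + 1 := by
  unfold addOneOrRaiseMax
  split_ifs with h1
  · rw [sum_raiseMax, ← sum_erase h1]
    omega
  · rw [sum_cons, add_comm]

theorem Nodup.addOneOrRaiseMax (hs : s.Nodup) : (addOneOrRaiseMax s).Nodup := by
  unfold Multiset.addOneOrRaiseMax
  split_ifs with h1
  · exact (hs.erase 1).raiseMax
  · exact nodup_cons.2 ⟨h1, hs⟩

theorem odd_of_mem_addOneOrRaiseMax (hs1 : s ≠ {1}) (hs : ∀ a ∈ s, Odd a) :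
    ∀ a ∈ addOneOrRaiseMax s, Odd a := by
  unfold addOneOrRaiseMax
  split_ifs with h1
  · exact odd_of_mem_raiseMax (erase_ne_zero_of_ne_singleton h1 hs1) fun a ha => hs a (mem_of_mem_erase ha)
  · exact forall_mem_cons.2 ⟨odd_one, hs⟩

theorem addOneOrRaiseMax_injOn : Set.InjOn addOneOrRaiseMax {s | s.Nodup ∧ s ≠ {1}} := by
  rintro s ⟨hs, hs1⟩ t ⟨ht, ht1⟩ hst
  unfold addOneOrRaiseMax at hst
  split_ifs at hst with h1s h1t h1t
  · rw [← cons_erase h1s, ← cons_erase h1t,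
      raiseMax_injOn (erase_ne_zero_of_ne_singleton h1s hs1) (erase_ne_zero_of_ne_singleton h1t ht1) hst]
  · exact (one_notMem_raiseMax_erase_one hs (hst ▸ mem_cons_self 1 t)).elim
  · exact (one_notMem_raiseMax_erase_one ht (hst ▸ mem_cons_self 1 s)).elim
  · exact (cons_inj_right 1).1 hst

end Multiset

theorem Nat.Partition.parts_ne_singleton_one {n : ℕ} (p : n.Partition) (hn : n ≠ 1) :
    p.parts ≠ {1} :=
  fun h => hn (by rw [← p.parts_sum, h, Multiset.sum_singleton])

abbrev DistinctOddPartition (n : ℕ) : Type :=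
  {p : n.Partition // p.parts.Nodup ∧ ∀ i ∈ p.parts, Odd i}

namespace DistinctOddPartition

variable {n : ℕ}

def addOneOrRaiseMax (hn : n ≠ 1) (p : DistinctOddPartition n) : DistinctOddPartition (n + 1) :=
  have hp1 := p.1.parts_ne_singleton_one hn
  have hodd := Multiset.odd_of_mem_addOneOrRaiseMax hp1 p.2.2
  ⟨{ parts := p.1.parts.addOneOrRaiseMax
     parts_pos := fun hi => (hodd _ hi).pos
     parts_sum := by rw [Multiset.sum_addOneOrRaiseMax, p.1.parts_sum] },
    p.2.1.addOneOrRaiseMax, hodd⟩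

theorem addOneOrRaiseMax_injective (hn : n ≠ 1) : Function.Injective (addOneOrRaiseMax hn) :=
  fun p q h => Subtype.ext <| Nat.Partition.ext <|
    Multiset.addOneOrRaiseMax_injOn ⟨p.2.1, p.1.parts_ne_singleton_one hn⟩
      ⟨q.2.1, q.1.parts_ne_singleton_one hn⟩ (congrArg (·.1.parts) h)

end DistinctOddPartition

/-- The number of partitions into distinct odd parts is weakly increasing:
`q(n+1) ≥ q(n)` for all `n ≥ 3`. -/
theorem qOdd_mono (n : ℕ) (hn : 3 ≤ n) : qOdd n ≤ qOdd (n + 1) :=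
  Fintype.card_le_of_injective _ (DistinctOddPartition.addOneOrRaiseMax_injective (by omega))
end

section
/- The map $\varphi$ defined on partitions $\nu = (\nu_1,\dots,\nu_\ell)$ of $n \ge 3$ into distinct odd parts by $\varphi(\nu) = (\nu_1,\dots,\nu_\ell,1)$ if $\nu_\ell > 1$, and $\varphi(\nu) = (\nu_1+2,\nu_2,\dots,\nu_{\ell-1})$ if $\nu_\ell = 1$, is a well-defined injection from the set of partitions of $n$ into distinct odd parts to the set of partitions of $n+1$ into distinct odd parts. -/
/-!
If `1` is not a part of `ν`, then `φ` adds the part `1`; if it is, and `ν ≠ (1)`, then the largest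
part `ν₁ ≥ 3` is a second part, `ν = 1 + ν₁ + ρ`, and `φ(ν) = (ν₁ + 2) + ρ`. Either way the sum
grows by one and the parts stay distinct and odd (`ν₁ + 2` exceeds every part of `ρ`). Since `1` is
a part of `φ(ν)` exactly when it is not a part of `ν`, `φ(ν)` tells which rule was applied, and in
the second case its largest part `ν₁ + 2` determines `ν₁` and `ρ`.
-/

/-- Partitions of `n` into distinct odd parts, as a subtype of `Nat.Partition n`. -/
def DistinctOdd (n : ℕ) :=
  {p : n.Partition // p.parts.Nodup ∧ ∀ i ∈ p.parts, Odd i}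

/-- The multiset of parts of `φ(ν)`: if the smallest part `ν_ℓ` is `> 1` (i.e. `1` is not a
part), append a part `1`; if `ν_ℓ = 1`, delete it and add `2` to the largest part `ν₁`
(here `ν.sup` is the largest part). -/
def phiParts (s : Multiset ℕ) : Multiset ℕ :=
  if 1 ∈ s then (s.sup + 2) ::ₘ ((s.erase 1).erase s.sup) else 1 ::ₘ s

theorem Multiset.sup_mem_of_ne_zero_s5 {α : Type*} [LinearOrder α] [OrderBot α] {s : Multiset α}
    (hs : s ≠ 0) : s.sup ∈ s := by
  obtain ⟨a, ha, hmax⟩ := s.exists_max_image id hs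
  rwa [le_antisymm (Multiset.sup_le.2 hmax) (Multiset.le_sup ha)]

open Multiset

variable {s : Multiset ℕ}

theorem one_lt_sup_of_one_mem (hnd : s.Nodup) (hsum : s.sum ≠ 1) (h1 : 1 ∈ s) : 1 < s.sup := by
  by_contra! hsup
  have hrest : (s.erase 1).sum = 0 := sum_eq_zero fun x hx => by
    have hx1 := (hnd.mem_erase_iff.1 hx).1
    have hxs := le_sup (mem_of_mem_erase hx)
    omega
  rw [← cons_erase h1, sum_cons, hrest] at hsum
  exact hsum rfl

theorem cons_one_cons_sup_erase (hnd : s.Nodup) (h1 : 1 ∈ s) (hsup : 1 < s.sup) :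
    1 ::ₘ s.sup ::ₘ (s.erase 1).erase s.sup = s := by
  rw [cons_erase (hnd.mem_erase_iff.2 ⟨hsup.ne', sup_mem_of_ne_zero_s5 (by rintro rfl; simp at h1)⟩),
    cons_erase h1]

theorem sum_phiParts (hnd : s.Nodup) (hsum : s.sum ≠ 1) : (phiParts s).sum = s.sum + 1 := by
  unfold phiParts
  split_ifs with h1
  · conv_rhs => rw [← cons_one_cons_sup_erase hnd h1 (one_lt_sup_of_one_mem hnd hsum h1)]
    simp only [sum_cons]
    omega
  · rw [sum_cons, add_comm]

theorem nodup_phiParts (hnd : s.Nodup) : (phiParts s).Nodup := by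
  unfold phiParts
  split_ifs with h1
  · refine nodup_cons.2 ⟨fun h => ?_, (hnd.erase 1).erase _⟩
    have := le_sup (mem_of_mem_erase (mem_of_mem_erase h))
    omega
  · exact nodup_cons.2 ⟨h1, hnd⟩

theorem odd_of_mem_phiParts (hodd : ∀ i ∈ s, Odd i) {i : ℕ} (hi : i ∈ phiParts s) : Odd i := by
  unfold phiParts at hi
  split_ifs at hi with h1
  · rcases mem_cons.1 hi with rfl | hi
    · exact (hodd _ (sup_mem_of_ne_zero_s5 (by rintro rfl; simp at h1))).add_even even_two
    · exact hodd _ (mem_of_mem_erase (mem_of_mem_erase hi))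
  · rcases mem_cons.1 hi with rfl | hi
    · exact odd_one
    · exact hodd _ hi

theorem one_mem_phiParts_iff (hnd : s.Nodup) : 1 ∈ phiParts s ↔ 1 ∉ s := by
  unfold phiParts
  split_ifs with h1
  · simp only [mem_cons, h1, not_true, iff_false, not_or]
    exact ⟨by omega, fun h => hnd.notMem_erase (mem_of_mem_erase h)⟩
  · simp [h1]

theorem sup_phiParts (h1 : 1 ∈ s) : (phiParts s).sup = s.sup + 2 := by
  rw [phiParts, if_pos h1, sup_cons, sup_eq_left]
  exact sup_le.2 fun b hb => (le_sup (mem_of_mem_erase (mem_of_mem_erase hb))).trans (by omega)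

theorem phiParts_injOn : Set.InjOn phiParts {s | s.Nodup ∧ s.sum ≠ 1} := by
  rintro s ⟨hnd, hsum⟩ t ⟨hnd', hsum'⟩ h
  have h1 : 1 ∈ s ↔ 1 ∈ t := by
    rw [← not_iff_not, ← one_mem_phiParts_iff hnd, ← one_mem_phiParts_iff hnd', h]
  by_cases h1s : 1 ∈ s
  · have h1t := h1.1 h1s
    have hsup : s.sup = t.sup := by
      have := sup_phiParts h1s
      rw [h, sup_phiParts h1t] at this
      omega
    simp only [phiParts, if_pos h1s, if_pos h1t, hsup, cons_inj_right] at h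
    rw [← cons_one_cons_sup_erase hnd h1s (one_lt_sup_of_one_mem hnd hsum h1s),
      ← cons_one_cons_sup_erase hnd' h1t (one_lt_sup_of_one_mem hnd' hsum' h1t), hsup, h]
  · simpa only [phiParts, if_neg h1s, if_neg (mt h1.2 h1s), cons_inj_right] using h

/-- The map `φ(ν) = (ν₁,…,ν_ℓ,1)` if `ν_ℓ > 1`, and `φ(ν) = (ν₁+2,ν₂,…,ν_{ℓ-1})` if
`ν_ℓ = 1`, is a well-defined injection from partitions of `n` into distinct odd parts to
partitions of `n+1` into distinct odd parts, for `n ≥ 3`. -/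
theorem phi_well_defined_injection (n : ℕ) (hn : 3 ≤ n) :
    ∃ φ : DistinctOdd n → DistinctOdd (n + 1),
      Function.Injective φ ∧
      ∀ ν : DistinctOdd n, (φ ν).1.parts = phiParts ν.1.parts := by
  have hsum (ν : DistinctOdd n) : ν.1.parts.sum ≠ 1 := by
    rw [ν.1.parts_sum]
    omega
  refine ⟨fun ν => ⟨⟨phiParts ν.1.parts, fun hi => (odd_of_mem_phiParts ν.2.2 hi).pos, ?_⟩,
    nodup_phiParts ν.2.1, fun _ => odd_of_mem_phiParts ν.2.2⟩, fun a b hab => ?_, fun _ => rfl⟩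
  · rw [sum_phiParts ν.2.1 (hsum ν), ν.1.parts_sum]
  · exact Subtype.ext <| Nat.Partition.ext <|
      phiParts_injOn ⟨a.2.1, hsum a⟩ ⟨b.2.1, hsum b⟩ (congrArg (·.1.parts) hab)
end

section
/- Let $w_n(m)$ be the number of pairs $(i, \alpha)$ where $i \ge 0$ and $\alpha$ is a self-conjugate partition of $n - 2i$ fitting inside the $m \times m$ square. Then the sequence $w_0(m), w_1(m), \dots, w_{m^2}(m)$ is weakly increasing. -/
open Finset

private lemma aux_sum (a n : ℕ) (h : a ≤ n) :
    (∑ i ∈ Finset.range n, if i + 1 ≤ a then (1 : ℕ) else 0) = a := by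
  induction n with
  | zero => simp; omega
  | succ n ih =>
    rw [Finset.sum_range_succ]
    by_cases hc : a ≤ n
    · rw [ih hc, if_neg (by omega)]
      omega
    · have ha : a = n + 1 := by omega
      subst ha
      rw [if_pos (by omega)]
      have : (∑ i ∈ Finset.range n, if i + 1 ≤ n + 1 then (1 : ℕ) else 0)
          = ∑ _i ∈ Finset.range n, 1 := by
        apply Finset.sum_congr rfl
        intro i hi
        rw [if_pos (by simp at hi; omega)]
      rw [this, Finset.sum_const, Finset.card_range]
      simp

private lemma multiset_range_sum (f : ℕ → ℕ) (n : ℕ) :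
    ((Multiset.range n).map f).sum = ∑ i ∈ Finset.range n, f i := rfl

private lemma sum_countP (s : Multiset ℕ) (n : ℕ) (h : ∀ a ∈ s, a ≤ n) :
    ((Multiset.range n).map fun i => s.countP (i + 1 ≤ ·)).sum = s.sum := by
  induction s using Multiset.induction with
  | empty => simp
  | cons a s ih =>
    have hs : ∀ b ∈ s, b ≤ n := fun b hb => h b (Multiset.mem_cons_of_mem hb)
    have ha : a ≤ n := h a (Multiset.mem_cons_self a s)
    simp only [Multiset.countP_cons]
    rw [show (fun i => Multiset.countP (i + 1 ≤ ·) s + if i + 1 ≤ a then 1 else 0)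
        = fun i => (fun i => Multiset.countP (i + 1 ≤ ·) s) i
            + (fun i => if i + 1 ≤ a then 1 else 0) i from rfl]
    rw [Multiset.sum_map_add, ih hs, Multiset.sum_cons,
      multiset_range_sum (fun i => if i + 1 ≤ a then (1:ℕ) else 0) n, aux_sum a n ha]
    omega

/-- The conjugate (transpose) of a partition: the `i`-th part of `conj p` is the number of
parts of `p` that are `≥ i+1`. -/
def Nat.Partition.conj {n : ℕ} (p : n.Partition) : n.Partition :=
  Nat.Partition.ofSums n ((Multiset.range n).map fun i => p.parts.countP (i + 1 ≤ ·))
    (by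
      rw [sum_countP _ n fun a ha =>
        le_trans (Multiset.single_le_sum (fun x _ => Nat.zero_le x) a ha) (le_of_eq p.parts_sum)]
      exact p.parts_sum)

/-- `wCount m n` is the number of pairs `(i, α)` with `i ≥ 0` and `α` a self-conjugate
partition of `n - 2i` fitting inside the `m × m` square. -/
def wCount (m n : ℕ) : ℕ :=
  ∑ i ∈ Finset.range (n / 2 + 1),
    Fintype.card {α : (n - 2 * i).Partition //
      α.conj = α ∧ α.parts.card ≤ m ∧ ∀ j ∈ α.parts, j ≤ m}

/-
A self-conjugate diagram is symmetric about the diagonal; let `d` be the side of its Durfee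
square. If the diagonal cell `(d, d)` is a corner, removing it turns a pair `(i, α)` with
`|α| = n - 2i` into the pair `(i + 1, α')` with `|α'| = n + 1 - 2(i + 1)`. Otherwise column
`d + 1` has exactly `d` cells, so by symmetry the cell `(d + 1, d + 1)` can be added, giving
`(i, α')` with `|α'| = n + 1 - 2i`; the new diagram still fits in the square because
`d² ≤ n < m²`. The images of the first operation never have a diagonal corner and those of the
second always do, and each operation can be undone, so this is an injection from the pairs
counted by `w_n(m)` into those counted by `w_{n+1}(m)`.
-/

namespace SelfConjugate

section ColumnProfile

variable {f g : ℕ → ℕ} {e j : ℕ}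

-- For antitone `f`, any `j ≥ 1` with `j ≤ f j` satisfies `j ≤ f 1`, which bounds the search.
def durfee (f : ℕ → ℕ) : ℕ := Nat.findGreatest (fun j => j ≤ f j) (f 1)

theorem durfee_le_apply (f : ℕ → ℕ) : durfee f ≤ f (durfee f) :=
  Nat.findGreatest_spec (P := fun j => j ≤ f j) (Nat.zero_le _) (Nat.zero_le _)

theorem apply_durfee_succ_le (hf : Antitone f) : f (durfee f + 1) ≤ durfee f := by
  by_cases h : durfee f + 1 ≤ f 1
  · have : ¬durfee f + 1 ≤ f (durfee f + 1) :=
      Nat.findGreatest_is_greatest (P := fun j => j ≤ f j) (Nat.lt_succ_self _) h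
    omega
  · have := hf (Nat.le_add_left 1 (durfee f))
    omega

theorem durfee_eq (hf : Antitone f) (h₁ : j ≤ f j) (h₂ : f (j + 1) ≤ j) : durfee f = j := by
  have hd := durfee_le_apply f
  have hd' := apply_durfee_succ_le hf
  rcases lt_trichotomy (durfee f) j with h | h | h
  · have := hf (show durfee f + 1 ≤ j by omega)
    omega
  · exact h
  · have := hf (show j + 1 ≤ durfee f by omega)
    omega

/-- Reading `f c` as the length of column `c`, the cell in row `r` and column `c` (both counted
from `1`) belongs to the diagram iff `r ≤ f c`; this says the diagram is its own transpose. -/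
def IsSymm (f : ℕ → ℕ) : Prop := ∀ r c, 1 ≤ r → 1 ≤ c → r ≤ f c → c ≤ f r

theorem IsSymm.of_eq_except (hf : IsSymm f) (hfg : ∀ t, 1 ≤ t → t ≠ e → g t = f t)
    (hfe : f e ≤ e) (hfe' : e ≤ f e + 1) (hge : g e ≤ e) (hge' : e ≤ g e + 1) :
    IsSymm g := by
  intro r c hr hc h
  by_cases hre : r = e <;> by_cases hce : c = e
  · subst hre hce
    exact h
  · subst hre
    rw [hfg c hc hce] at h
    have := hf _ _ hr hc h
    omega
  · subst hce
    have := hf r _ hr hc (by omega)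
    rw [hfg r hr hre]
    omega
  · rw [hfg c hc hce] at h
    rw [hfg r hr hre]
    exact hf r c hr hc h

theorem IsSymm.apply_durfee_succ_lt (hs : IsSymm f) (hf : Antitone f) (h : 0 < durfee f) :
    f (durfee f + 1) < f (durfee f) := by
  have := durfee_le_apply f
  have := apply_durfee_succ_le hf
  by_contra hge
  have := hs (durfee f) (durfee f + 1) h (by omega) (by omega)
  omega

/-- `f (d + 1) < d` says that row `d` ends at column `d`; for symmetric `f`, column `d` then ends
at row `d` too, so `(d, d)` is a corner. -/
def HasDiagCorner (f : ℕ → ℕ) : Prop := 0 < durfee f ∧ f (durfee f + 1) < durfee f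

instance : DecidablePred HasDiagCorner := fun _ => inferInstanceAs (Decidable (_ ∧ _))

theorem apply_durfee_succ_eq (hf : Antitone f) (h : ¬HasDiagCorner f) :
    f (durfee f + 1) = durfee f := by
  have := apply_durfee_succ_le hf
  unfold HasDiagCorner at h
  omega

theorem IsSymm.apply_durfee (hs : IsSymm f) (h : HasDiagCorner f) : f (durfee f) = durfee f := by
  have := durfee_le_apply f
  by_contra hne
  have := hs (durfee f + 1) (durfee f) (by omega) h.1 (by omega)
  have := h.2
  omega

theorem durfee_eq_succ_of_addCell (hf : Antitone f) (hg : Antitone g) (h : ¬HasDiagCorner f)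
    (hfg : ∀ t, 1 ≤ t → g t = f t + if t = durfee f + 1 then 1 else 0) :
    durfee g = durfee f + 1 := by
  have hd := apply_durfee_succ_eq hf h
  have h₁ := hfg (durfee f + 1) (by omega)
  have h₂ := hfg (durfee f + 1 + 1) (by omega)
  have := hf (show durfee f + 1 ≤ durfee f + 1 + 1 by omega)
  rw [if_pos rfl] at h₁
  rw [if_neg (by omega)] at h₂
  exact durfee_eq hg (by omega) (by omega)

theorem hasDiagCorner_of_addCell (hf : Antitone f) (hg : Antitone g) (h : ¬HasDiagCorner f)
    (hfg : ∀ t, 1 ≤ t → g t = f t + if t = durfee f + 1 then 1 else 0) : HasDiagCorner g := by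
  have hd := apply_durfee_succ_eq hf h
  have h₂ := hfg (durfee f + 1 + 1) (by omega)
  have := hf (show durfee f + 1 ≤ durfee f + 1 + 1 by omega)
  rw [if_neg (by omega)] at h₂
  unfold HasDiagCorner
  rw [durfee_eq_succ_of_addCell hf hg h hfg]
  omega

theorem durfee_eq_pred_of_removeCell (hf : Antitone f) (hg : Antitone g) (hs : IsSymm f)
    (h : HasDiagCorner f) (hfg : ∀ t, 1 ≤ t → f t = g t + if t = durfee f then 1 else 0) :
    durfee g = durfee f - 1 := by
  have hd := hs.apply_durfee h
  have h₁ := hfg (durfee f) h.1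
  rw [if_pos rfl] at h₁
  apply durfee_eq hg
  · rcases Nat.lt_or_ge (durfee f) 2 with h2 | h2
    · omega
    · have h₂ := hfg (durfee f - 1) (by omega)
      rw [if_neg (by omega)] at h₂
      have := hf (show durfee f - 1 ≤ durfee f by omega)
      omega
  · rw [Nat.sub_add_cancel h.1]
    omega

theorem not_hasDiagCorner_of_removeCell (hf : Antitone f) (hg : Antitone g) (hs : IsSymm f)
    (h : HasDiagCorner f) (hfg : ∀ t, 1 ≤ t → f t = g t + if t = durfee f then 1 else 0) :
    ¬HasDiagCorner g := by
  have h₁ := hfg (durfee f) h.1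
  rw [if_pos rfl, hs.apply_durfee h] at h₁
  rintro ⟨-, hlt⟩
  rw [durfee_eq_pred_of_removeCell hf hg hs h hfg, Nat.sub_add_cancel h.1] at hlt
  omega

end ColumnProfile

section ColumnLengths

variable {s t : Multiset ℕ} {a j : ℕ}

def colLen (s : Multiset ℕ) (j : ℕ) : ℕ := s.countP (j ≤ ·)

theorem colLen_antitone (s : Multiset ℕ) : Antitone (colLen s) := fun i j hij => by
  simp only [colLen, Multiset.countP_eq_card_filter]
  exact Multiset.card_le_card (Multiset.monotone_filter_right s fun a h => hij.trans h)

theorem colLen_cons (a : ℕ) (s : Multiset ℕ) (j : ℕ) :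
    colLen (a ::ₘ s) j = colLen s j + if j ≤ a then 1 else 0 :=
  Multiset.countP_cons _ _ _

theorem colLen_eq_colLen_succ_add_count (s : Multiset ℕ) (j : ℕ) :
    colLen s j = colLen s (j + 1) + s.count j := by
  induction s using Multiset.induction with
  | empty => simp [colLen]
  | cons b s ih =>
    rw [colLen_cons, colLen_cons, Multiset.count_cons, ih]
    split_ifs <;> omega

theorem eq_of_colLen_eq (hs : ∀ a ∈ s, 0 < a) (ht : ∀ a ∈ t, 0 < a)
    (h : ∀ j, 1 ≤ j → colLen s j = colLen t j) : s = t := by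
  ext a
  rcases Nat.eq_zero_or_pos a with rfl | ha
  · rw [Multiset.count_eq_zero_of_notMem fun h0 => (hs 0 h0).false,
      Multiset.count_eq_zero_of_notMem fun h0 => (ht 0 h0).false]
  · have := colLen_eq_colLen_succ_add_count s a
    have := colLen_eq_colLen_succ_add_count t a
    have := h a ha
    have := h (a + 1) (by omega)
    omega

theorem mem_of_colLen_succ_lt (h : colLen s (a + 1) < colLen s a) : a ∈ s := by
  rw [← Multiset.count_pos]
  have := colLen_eq_colLen_succ_add_count s a
  omega

theorem colLen_eq_zero_iff : colLen s j = 0 ↔ ∀ a ∈ s, a < j := by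
  simp [colLen, Multiset.countP_eq_zero]

theorem colLen_one (hs : ∀ a ∈ s, 0 < a) : colLen s 1 = Multiset.card s :=
  Multiset.countP_eq_card.2 hs

theorem colLen_le_sum (hs : ∀ a ∈ s, 0 < a) (j : ℕ) : colLen s j ≤ s.sum := by
  have := Multiset.card_nsmul_le_sum (a := 1) hs
  rw [smul_eq_mul, mul_one] at this
  exact (Multiset.countP_le_card _ s).trans this

theorem sum_filter_ne_zero (s : Multiset ℕ) : (s.filter (· ≠ 0)).sum = s.sum := by
  have h0 : (s.filter fun a => ¬a ≠ 0).sum = 0 :=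
    Multiset.sum_eq_zero fun x hx => by simpa using Multiset.of_mem_filter hx
  have := Multiset.sum_filter_add_sum_filter_not (· ≠ 0) (s := s)
  omega

theorem mul_self_le_sum (h : j ≤ colLen s j) : j * j ≤ s.sum := by
  have hfilter : Multiset.card (s.filter (j ≤ ·)) * j ≤ (s.filter (j ≤ ·)).sum := by
    have := Multiset.card_nsmul_le_sum (s := s.filter (j ≤ ·)) (a := j) fun x hx =>
      Multiset.of_mem_filter hx
    rwa [smul_eq_mul] at this
  calc j * j ≤ colLen s j * j := Nat.mul_le_mul_right j h
    _ ≤ (s.filter (j ≤ ·)).sum := by rwa [colLen, Multiset.countP_eq_card_filter]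
    _ ≤ s.sum := (Nat.le_add_right _ _).trans_eq (Multiset.sum_filter_add_sum_filter_not _)

theorem durfee_colLen_lt {m : ℕ} (h : s.sum < m * m) : durfee (colLen s) < m := by
  have := mul_self_le_sum (durfee_le_apply (colLen s))
  by_contra hm
  have := Nat.mul_self_le_mul_self (not_lt.1 hm)
  omega

theorem colLen_filter_ne_zero (s : Multiset ℕ) (hj : 1 ≤ j) :
    colLen (s.filter (· ≠ 0)) j = colLen s j := by
  rw [colLen, colLen, Multiset.countP_filter]
  exact Multiset.countP_congr rfl fun x _ => propext ⟨And.left, fun h => ⟨h, by omega⟩⟩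

theorem colLen_cons_erase (ha : a ∈ s) (b j : ℕ) :
    colLen (b ::ₘ s.erase a) j + (if j ≤ a then 1 else 0) =
      colLen s j + if j ≤ b then 1 else 0 := by
  conv_rhs => rw [← Multiset.cons_erase ha]
  rw [colLen_cons, colLen_cons]
  omega

end ColumnLengths

section Conjugate

theorem colLen_conj_parts {n : ℕ} (p : n.Partition) {v : ℕ} (hv : 1 ≤ v) :
    colLen p.conj.parts v = #{i ∈ range n | v ≤ colLen p.parts (i + 1)} := by
  change colLen (((Multiset.range n).map fun i => colLen p.parts (i + 1)).filter (· ≠ 0)) v = _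
  rw [colLen_filter_ne_zero _ hv, colLen, Multiset.countP_map]
  rfl

theorem le_card_filter_range_iff {g : ℕ → ℕ} (hg : Antitone g) {n r : ℕ} (v : ℕ)
    (hr : 1 ≤ r) (hrn : r ≤ n) : r ≤ #{i ∈ range n | v ≤ g (i + 1)} ↔ v ≤ g r := by
  constructor
  · intro h
    by_contra hv
    have : #{i ∈ range n | v ≤ g (i + 1)} ≤ #(range (r - 1)) := card_le_card fun i hi => by
      rw [mem_filter] at hi
      rw [mem_range]
      by_contra hi'
      exact hv (hi.2.trans (hg (by omega)))
    rw [card_range] at this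
    omega
  · intro hv
    calc r = #(range r) := (card_range r).symm
      _ ≤ _ := card_le_card fun i hi => by
        rw [mem_range] at hi
        exact mem_filter.2 ⟨mem_range.2 (by omega), hv.trans (hg (by omega))⟩

theorem conj_eq_self_iff {n : ℕ} (p : n.Partition) : p.conj = p ↔ IsSymm (colLen p.parts) := by
  have hpos : ∀ a ∈ p.parts, 0 < a := fun a ha => p.parts_pos ha
  have hle : ∀ v, colLen p.parts v ≤ n := fun v => (colLen_le_sum hpos v).trans_eq p.parts_sum
  constructor
  · intro hc r c hr hc' h
    have key := le_card_filter_range_iff (colLen_antitone p.parts) c hr (h.trans (hle c))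
    rw [← colLen_conj_parts p hc', hc] at key
    exact key.1 h
  · intro hs
    refine Nat.Partition.ext (eq_of_colLen_eq (fun a ha => p.conj.parts_pos ha) hpos fun v hv => ?_)
    rw [colLen_conj_parts p hv]
    refine eq_of_forall_le_iff fun r => ?_
    rcases Nat.eq_zero_or_pos r with rfl | hr
    · simp
    by_cases hrn : r ≤ n
    · rw [le_card_filter_range_iff (colLen_antitone p.parts) v hr hrn]
      exact ⟨hs v r hv hr, hs r v hr hv⟩
    · have := (card_filter_le (range n) fun i => v ≤ colLen p.parts (i + 1)).trans_eq
        (card_range n)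
      have := hle v
      omega

end Conjugate

section DiagonalCell

def IsSelfConjugate (s : Multiset ℕ) : Prop := (∀ a ∈ s, 0 < a) ∧ IsSymm (colLen s)

/-- For self-conjugate `s` without a diagonal corner, this adds the cell `(d + 1, d + 1)`,
where `d` is the Durfee size. -/
def addDiag (s : Multiset ℕ) : Multiset ℕ :=
  (durfee (colLen s) + 1) ::ₘ s.erase (durfee (colLen s))

/-- For self-conjugate `s` with a diagonal corner `(d, d)`, this removes it; the filter drops the
part `0` left behind when `d = 1`. -/
def removeDiag (s : Multiset ℕ) : Multiset ℕ :=
  ((durfee (colLen s) - 1) ::ₘ s.erase (durfee (colLen s))).filter (· ≠ 0)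

variable {s t : Multiset ℕ}

theorem IsSelfConjugate.durfee_mem (hs : IsSelfConjugate s) (h : 0 < durfee (colLen s)) :
    durfee (colLen s) ∈ s :=
  mem_of_colLen_succ_lt (hs.2.apply_durfee_succ_lt (colLen_antitone s) h)

theorem IsSelfConjugate.colLen_addDiag (hs : IsSelfConjugate s) {j : ℕ} (hj : 1 ≤ j) :
    colLen (addDiag s) j = colLen s j + if j = durfee (colLen s) + 1 then 1 else 0 := by
  unfold addDiag
  rcases Nat.eq_zero_or_pos (durfee (colLen s)) with h0 | h0
  · rw [h0, Multiset.erase_of_notMem fun h0 => (hs.1 0 h0).false, colLen_cons]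
    split_ifs <;> omega
  · have := colLen_cons_erase (hs.durfee_mem h0) (durfee (colLen s) + 1) j
    split_ifs at this ⊢ <;> omega

theorem IsSelfConjugate.colLen_removeDiag (hs : IsSelfConjugate s) (h : HasDiagCorner (colLen s))
    {j : ℕ} (hj : 1 ≤ j) :
    colLen s j = colLen (removeDiag s) j + if j = durfee (colLen s) then 1 else 0 := by
  have := colLen_cons_erase (hs.durfee_mem h.1) (durfee (colLen s) - 1) j
  rw [removeDiag, colLen_filter_ne_zero _ hj]
  split_ifs at this ⊢ <;> omega

theorem IsSelfConjugate.sum_addDiag (hs : IsSelfConjugate s) :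
    (addDiag s).sum = s.sum + 1 := by
  rw [addDiag, Multiset.sum_cons]
  rcases Nat.eq_zero_or_pos (durfee (colLen s)) with h0 | h0
  · rw [h0, Multiset.erase_of_notMem fun h0 => (hs.1 0 h0).false]
    omega
  · have := Multiset.sum_erase (hs.durfee_mem h0)
    omega

theorem IsSelfConjugate.sum_removeDiag (hs : IsSelfConjugate s) (h : HasDiagCorner (colLen s)) :
    (removeDiag s).sum + 1 = s.sum := by
  have := Multiset.sum_erase (hs.durfee_mem h.1)
  have := h.1
  rw [removeDiag, sum_filter_ne_zero, Multiset.sum_cons]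
  omega

theorem isSelfConjugate_addDiag (hs : IsSelfConjugate s) (h : ¬HasDiagCorner (colLen s)) :
    IsSelfConjugate (addDiag s) := by
  refine ⟨fun a ha => ?_, ?_⟩
  · rcases Multiset.mem_cons.1 ha with rfl | ha
    · omega
    · exact hs.1 a (Multiset.mem_of_mem_erase ha)
  · have hd := apply_durfee_succ_eq (colLen_antitone s) h
    have he := hs.colLen_addDiag (j := durfee (colLen s) + 1) (by omega)
    rw [if_pos rfl] at he
    refine hs.2.of_eq_except (e := durfee (colLen s) + 1) (fun j hj hne => ?_)
      (by omega) (by omega) (by omega) (by omega)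
    rw [hs.colLen_addDiag hj, if_neg hne, add_zero]

theorem isSelfConjugate_removeDiag (hs : IsSelfConjugate s) (h : HasDiagCorner (colLen s)) :
    IsSelfConjugate (removeDiag s) := by
  refine ⟨fun a ha => Nat.pos_of_ne_zero (Multiset.of_mem_filter (p := (· ≠ 0)) ha), ?_⟩
  have hd := hs.2.apply_durfee h
  have he := hs.colLen_removeDiag h h.1
  rw [if_pos rfl] at he
  refine hs.2.of_eq_except (e := durfee (colLen s)) (fun j hj hne => ?_)
    (by omega) (by omega) (by omega) (by omega)
  rw [hs.colLen_removeDiag h hj, if_neg hne, add_zero]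

theorem IsSelfConjugate.durfee_addDiag (hs : IsSelfConjugate s) (h : ¬HasDiagCorner (colLen s)) :
    durfee (colLen (addDiag s)) = durfee (colLen s) + 1 :=
  durfee_eq_succ_of_addCell (colLen_antitone s) (colLen_antitone _) h
    fun _ hj => hs.colLen_addDiag hj

theorem IsSelfConjugate.hasDiagCorner_addDiag (hs : IsSelfConjugate s)
    (h : ¬HasDiagCorner (colLen s)) : HasDiagCorner (colLen (addDiag s)) :=
  hasDiagCorner_of_addCell (colLen_antitone s) (colLen_antitone _) h
    fun _ hj => hs.colLen_addDiag hj

theorem IsSelfConjugate.durfee_removeDiag (hs : IsSelfConjugate s) (h : HasDiagCorner (colLen s)) :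
    durfee (colLen (removeDiag s)) = durfee (colLen s) - 1 :=
  durfee_eq_pred_of_removeCell (colLen_antitone s) (colLen_antitone _) hs.2 h
    fun _ hj => hs.colLen_removeDiag h hj

theorem IsSelfConjugate.not_hasDiagCorner_removeDiag (hs : IsSelfConjugate s)
    (h : HasDiagCorner (colLen s)) : ¬HasDiagCorner (colLen (removeDiag s)) :=
  not_hasDiagCorner_of_removeCell (colLen_antitone s) (colLen_antitone _) hs.2 h
    fun _ hj => hs.colLen_removeDiag h hj

theorem IsSelfConjugate.addDiag_inj (hs : IsSelfConjugate s) (ht : IsSelfConjugate t)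
    (hs' : ¬HasDiagCorner (colLen s)) (ht' : ¬HasDiagCorner (colLen t))
    (h : addDiag s = addDiag t) : s = t := by
  have hd : durfee (colLen s) = durfee (colLen t) := by
    have := hs.durfee_addDiag hs'
    rw [h, ht.durfee_addDiag ht'] at this
    omega
  refine eq_of_colLen_eq hs.1 ht.1 fun j hj => ?_
  have := hs.colLen_addDiag hj
  rw [h, ht.colLen_addDiag hj, hd] at this
  omega

theorem IsSelfConjugate.removeDiag_inj (hs : IsSelfConjugate s) (ht : IsSelfConjugate t)
    (hs' : HasDiagCorner (colLen s)) (ht' : HasDiagCorner (colLen t))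
    (h : removeDiag s = removeDiag t) : s = t := by
  have hd : durfee (colLen s) = durfee (colLen t) := by
    have := hs.durfee_removeDiag hs'
    rw [h, ht.durfee_removeDiag ht'] at this
    have := hs'.1
    have := ht'.1
    omega
  refine eq_of_colLen_eq hs.1 ht.1 fun j hj => ?_
  rw [hs.colLen_removeDiag hs' hj, ht.colLen_removeDiag ht' hj, h, hd]

theorem IsSelfConjugate.fits_iff (hs : IsSelfConjugate s) (m : ℕ) :
    (Multiset.card s ≤ m ∧ ∀ j ∈ s, j ≤ m) ↔ colLen s (m + 1) = 0 := by
  have : (∀ j ∈ s, j ≤ m) ↔ colLen s (m + 1) = 0 := by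
    simp only [colLen_eq_zero_iff, Nat.lt_succ_iff]
  rw [this, ← colLen_one hs.1]
  refine ⟨And.right, fun h => ⟨?_, h⟩⟩
  by_contra hlt
  have := hs.2 (m + 1) 1 (by omega) le_rfl (by omega)
  omega

end DiagonalCell

section Counting

def boxedSelfConj (m k : ℕ) : Finset (Multiset ℕ) :=
  ({α : k.Partition | α.conj = α ∧ α.parts.card ≤ m ∧ ∀ j ∈ α.parts, j ≤ m} :
    Finset _).image Nat.Partition.parts

theorem card_boxedSelfConj (m k : ℕ) :
    #(boxedSelfConj m k) = Fintype.card {α : k.Partition //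
      α.conj = α ∧ α.parts.card ≤ m ∧ ∀ j ∈ α.parts, j ≤ m} := by
  rw [boxedSelfConj, card_image_of_injective _ fun _ _ => Nat.Partition.ext, Fintype.card_subtype]

theorem mem_boxedSelfConj {m k : ℕ} {s : Multiset ℕ} :
    s ∈ boxedSelfConj m k ↔ IsSelfConjugate s ∧ s.sum = k ∧ colLen s (m + 1) = 0 := by
  simp only [boxedSelfConj, mem_image, mem_filter, mem_univ, true_and]
  constructor
  · rintro ⟨α, ⟨hc, hfit⟩, rfl⟩
    have hs : IsSelfConjugate α.parts :=
      ⟨fun a ha => α.parts_pos ha, (conj_eq_self_iff α).1 hc⟩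
    exact ⟨hs, α.parts_sum, (hs.fits_iff m).1 hfit⟩
  · rintro ⟨hs, hsum, hfit⟩
    exact ⟨⟨s, fun ha => hs.1 _ ha, hsum⟩,
      ⟨(conj_eq_self_iff _).2 hs.2, (hs.fits_iff m).2 hfit⟩, rfl⟩

/-- The pairs `(i, α)` counted by `wCount m n`, with `α` recorded by its multiset of parts. -/
def wPairs (m n : ℕ) : Finset (Σ _ : ℕ, Multiset ℕ) :=
  (range (n / 2 + 1)).sigma fun i => boxedSelfConj m (n - 2 * i)

theorem wCount_eq_card_wPairs (m n : ℕ) : wCount m n = #(wPairs m n) := by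
  simp only [wCount, wPairs, card_sigma, card_boxedSelfConj]

theorem mem_wPairs {m n i : ℕ} {s : Multiset ℕ} :
    ⟨i, s⟩ ∈ wPairs m n ↔
      IsSelfConjugate s ∧ 2 * i + s.sum = n ∧ colLen s (m + 1) = 0 := by
  simp only [wPairs, mem_sigma, mem_range, mem_boxedSelfConj]
  constructor
  · rintro ⟨hi, hs, hsum, hfit⟩
    exact ⟨hs, by omega, hfit⟩
  · rintro ⟨hs, hsum, hfit⟩
    exact ⟨by omega, hs, by omega, hfit⟩

def diagStep (x : Σ _ : ℕ, Multiset ℕ) : Σ _ : ℕ, Multiset ℕ :=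
  if HasDiagCorner (colLen x.2) then ⟨x.1 + 1, removeDiag x.2⟩ else ⟨x.1, addDiag x.2⟩

theorem diagStep_mapsTo {m n : ℕ} (hn : n + 1 ≤ m ^ 2) :
    Set.MapsTo diagStep (wPairs m n) (wPairs m (n + 1)) := by
  rintro ⟨i, s⟩ hx
  obtain ⟨hs, hsum, hfit⟩ := mem_wPairs.1 hx
  simp only [diagStep, mem_coe]
  split_ifs with h
  · have := hs.sum_removeDiag h
    have := hs.colLen_removeDiag h (j := m + 1) (by omega)
    exact mem_wPairs.2 ⟨isSelfConjugate_removeDiag hs h, by omega, by omega⟩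
  · have hd := durfee_colLen_lt (m := m) (s := s) (by rw [← sq]; omega)
    have := hs.sum_addDiag
    have := hs.colLen_addDiag (j := m + 1) (by omega)
    rw [if_neg (by omega)] at this
    exact mem_wPairs.2 ⟨isSelfConjugate_addDiag hs h, by omega, by omega⟩

theorem diagStep_injOn : Set.InjOn diagStep {x | IsSelfConjugate x.2} := by
  rintro ⟨i, s⟩ (hs : IsSelfConjugate s) ⟨j, t⟩ (ht : IsSelfConjugate t) hst
  simp only [diagStep] at hst
  split_ifs at hst with hs' ht' ht'
  · obtain ⟨hij, hst⟩ := Sigma.mk.inj_iff.1 hst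
    rw [hs.removeDiag_inj ht hs' ht' (eq_of_heq hst), Nat.succ_injective hij]
  · obtain ⟨-, hst⟩ := Sigma.mk.inj_iff.1 hst
    exact (hs.not_hasDiagCorner_removeDiag hs'
      (eq_of_heq hst ▸ ht.hasDiagCorner_addDiag ht')).elim
  · obtain ⟨-, hst⟩ := Sigma.mk.inj_iff.1 hst
    exact (ht.not_hasDiagCorner_removeDiag ht'
      (eq_of_heq hst ▸ hs.hasDiagCorner_addDiag hs')).elim
  · obtain ⟨hij, hst⟩ := Sigma.mk.inj_iff.1 hst
    rw [hs.addDiag_inj ht hs' ht' (eq_of_heq hst), hij]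

end Counting

end SelfConjugate

/-- The sequence `w_0(m), w_1(m), …, w_{m²}(m)` is weakly increasing. -/
theorem wCount_mono (m n : ℕ) (hn : n + 1 ≤ m ^ 2) : wCount m n ≤ wCount m (n + 1) := by
  rw [SelfConjugate.wCount_eq_card_wPairs, SelfConjugate.wCount_eq_card_wPairs]
  exact card_le_card_of_injOn SelfConjugate.diagStep (SelfConjugate.diagStep_mapsTo hn)
    (SelfConjugate.diagStep_injOn.mono fun ⟨_, _⟩ hx => (SelfConjugate.mem_wPairs.1 hx).1)
end

section
/- The coefficients of the polynomial $\mathcal{B}_m(q) = (1 + q^2 + q^4 + \dots + q^N)\prod_{i=1}^m(1+q^{2i-1})$, where $N = m^2-1$ if $m$ is odd and $N = m^2$ if $m$ is even, form a symmetric and unimodal sequence. -/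
open Polynomial Finset

/-!
Write `N` for the top exponent of the even factor. Since
`(1 + q² + ⋯ + q^N)(1 + q) = 1 + q + ⋯ + q^(N+1)`, for `m ≥ 1` the polynomial `ℬ_m` is this
full geometric sum times `P = ∏_{i=2}^m (1 + q^(2i-1))`, so for `n ≤ N + 1` its `n`-th
coefficient is the partial sum `P₀ + ⋯ + Pₙ`: the coefficients increase up to `N + 1`, which is
past the middle of the degree `N + m²`. Both factors in the definition of `ℬ_m` are palindromic,
hence so is `ℬ_m`, and the symmetry mirrors the increase into a decrease.
-/

/-- `ℬ_m(q) = (1 + q² + q⁴ + ⋯ + q^N) · ∏_{i=1}^m (1 + q^{2i-1})`, where `N = m²-1` for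
odd `m` and `N = m²` for even `m`. -/
noncomputable def Bpoly (m : ℕ) : Polynomial ℕ :=
  (∑ i ∈ Finset.range ((if Odd m then m ^ 2 - 1 else m ^ 2) / 2 + 1), X ^ (2 * i)) *
    ∏ i ∈ Finset.range m, (1 + X ^ (2 * i + 1))

theorem exists_unimodal_of_symm_of_monotoneOn {α : Type*} [Preorder α] {f : ℕ → α} {d K : ℕ}
    (hsymm : ∀ j ≤ d, f j = f (d - j)) (hmono : MonotoneOn f (Set.Iic K)) (hK : d ≤ 2 * K) :
    ∃ k ≤ d, (∀ i j, i ≤ j → j ≤ k → f i ≤ f j) ∧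
      (∀ i j, k ≤ i → i ≤ j → j ≤ d → f j ≤ f i) := by
  refine ⟨d / 2, Nat.div_le_self d 2, fun i j hij hj => ?_, fun i j hi hij hj => ?_⟩
  · exact hmono (Set.mem_Iic.mpr (by omega)) (Set.mem_Iic.mpr (by omega)) hij
  · rw [hsymm i (by omega), hsymm j hj]
    exact hmono (Set.mem_Iic.mpr (by omega)) (Set.mem_Iic.mpr (by omega)) (by omega)

theorem sum_range_two_mul_add_one (m : ℕ) : ∑ i ∈ range m, (2 * i + 1) = m ^ 2 := by
  induction m with
  | zero => simp
  | succ m ih => rw [sum_range_succ, ih]; ring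

theorem reflect_sum {R ι : Type*} [Semiring R] (s : Finset ι) (f : ι → R[X]) (N : ℕ) :
    reflect N (∑ i ∈ s, f i) = ∑ i ∈ s, reflect N (f i) :=
  map_sum (⟨⟨reflect N, reflect_zero⟩, fun f g => reflect_add f g N⟩ : R[X] →+ R[X]) f s

section

variable {R : Type*} [CommSemiring R]

theorem coeff_geomSum_X_mul_of_lt (H : R[X]) {M n : ℕ} (hn : n < M) :
    ((∑ j ∈ range M, (X : R[X]) ^ j) * H).coeff n = ∑ k ∈ range (n + 1), H.coeff k := by
  rw [mul_comm, coeff_mul, Nat.sum_antidiagonal_eq_sum_range_succ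
    (fun k l => H.coeff k * (∑ j ∈ range M, (X : R[X]) ^ j).coeff l)]
  refine sum_congr rfl fun k _ => ?_
  simp [coeff_X_pow, show n - k < M by omega]

theorem monotoneOn_coeff_geomSum_X_mul [PartialOrder R] [CanonicallyOrderedAdd R]
    (H : R[X]) (M : ℕ) :
    MonotoneOn ((∑ j ∈ range (M + 1), (X : R[X]) ^ j) * H).coeff (Set.Iic M) := by
  intro i hi j hj hij
  rw [coeff_geomSum_X_mul_of_lt H (Nat.lt_succ_of_le hi),
    coeff_geomSum_X_mul_of_lt H (Nat.lt_succ_of_le hj)]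
  exact sum_le_sum_of_subset (range_subset_range.mpr (by omega))

theorem sum_X_pow_two_mul_mul_one_add_X (t : ℕ) :
    (∑ i ∈ range (t + 1), (X : R[X]) ^ (2 * i)) * (1 + X) = ∑ j ∈ range (2 * t + 2), X ^ j := by
  induction t with
  | zero => simp [add_comm]
  | succ t ih =>
    rw [sum_range_succ, add_mul, ih, show 2 * (t + 1) + 2 = 2 * t + 2 + 1 + 1 by ring,
      sum_range_succ _ (2 * t + 2 + 1), sum_range_succ _ (2 * t + 2)]
    ring

theorem natDegree_sum_X_pow_two_mul_le (t : ℕ) :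
    (∑ i ∈ range (t + 1), (X : R[X]) ^ (2 * i)).natDegree ≤ 2 * t :=
  natDegree_sum_le_of_forall_le _ _ fun i hi =>
    (natDegree_X_pow_le _).trans (by rw [mem_range] at hi; omega)

theorem reflect_sum_X_pow_two_mul (t : ℕ) :
    reflect (2 * t) (∑ i ∈ range (t + 1), (X : R[X]) ^ (2 * i)) =
      ∑ i ∈ range (t + 1), (X : R[X]) ^ (2 * i) := by
  rw [reflect_sum, ← sum_range_reflect]
  refine sum_congr rfl fun i hi => ?_
  rw [mem_range] at hi
  rw [reflect_monomial, revAt_le (by omega)]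
  congr 1
  omega

theorem natDegree_prod_one_add_X_pow_odd_le (m : ℕ) :
    (∏ i ∈ range m, (1 + X ^ (2 * i + 1) : R[X])).natDegree ≤ m ^ 2 := by
  refine (natDegree_prod_le _ _).trans ?_
  rw [← sum_range_two_mul_add_one]
  refine sum_le_sum fun i _ => (natDegree_add_le _ _).trans ?_
  simp [natDegree_X_pow_le]

theorem reflect_prod_one_add_X_pow_odd (m : ℕ) :
    reflect (m ^ 2) (∏ i ∈ range m, (1 + X ^ (2 * i + 1) : R[X])) =
      ∏ i ∈ range m, (1 + X ^ (2 * i + 1) : R[X]) := by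
  induction m with
  | zero => simp [reflect_one]
  | succ m ih =>
    have hdeg : (1 + X ^ (2 * m + 1) : R[X]).natDegree ≤ 2 * m + 1 :=
      (natDegree_add_le _ _).trans (by simp [natDegree_X_pow_le])
    rw [prod_range_succ, show (m + 1) ^ 2 = m ^ 2 + (2 * m + 1) by ring,
      reflect_mul _ _ (natDegree_prod_one_add_X_pow_odd_le m) hdeg, ih, reflect_add, reflect_one,
      reflect_monomial, revAt_le le_rfl, Nat.sub_self, pow_zero, add_comm]

end

theorem even_ite_odd_sq_sub_one (m : ℕ) : Even (if Odd m then m ^ 2 - 1 else m ^ 2) := by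
  split_ifs with hm
  · exact Nat.Odd.sub_odd hm.pow odd_one
  · exact Nat.even_pow.mpr ⟨Nat.not_odd_iff_even.mp hm, two_ne_zero⟩

theorem reflect_Bpoly (m : ℕ) :
    reflect ((if Odd m then m ^ 2 - 1 else m ^ 2) + m ^ 2) (Bpoly m) = Bpoly m := by
  obtain ⟨t, ht⟩ := even_iff_two_dvd.mp (even_ite_odd_sq_sub_one m)
  rw [Bpoly, ht, Nat.mul_div_cancel_left t two_pos, reflect_mul _ _
    (natDegree_sum_X_pow_two_mul_le t) (natDegree_prod_one_add_X_pow_odd_le m),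
    reflect_sum_X_pow_two_mul, reflect_prod_one_add_X_pow_odd]

theorem Bpoly_eq_geomSum_mul {m : ℕ} (hm : m ≠ 0) :
    Bpoly m = (∑ j ∈ range ((if Odd m then m ^ 2 - 1 else m ^ 2) + 2), X ^ j) *
      ∏ i ∈ range (m - 1), (1 + X ^ (2 * i + 3)) := by
  obtain ⟨m, rfl⟩ := Nat.exists_eq_add_one_of_ne_zero hm
  obtain ⟨t, ht⟩ := even_iff_two_dvd.mp (even_ite_odd_sq_sub_one (m + 1))
  rw [Bpoly, ht, Nat.mul_div_cancel_left t two_pos, ← sum_X_pow_two_mul_mul_one_add_X,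
    prod_range_succ', Nat.add_sub_cancel]
  ring_nf

theorem monotoneOn_coeff_Bpoly {m : ℕ} (hm : m ≠ 0) :
    MonotoneOn (Bpoly m).coeff (Set.Iic ((if Odd m then m ^ 2 - 1 else m ^ 2) + 1)) := by
  rw [Bpoly_eq_geomSum_mul hm]
  exact monotoneOn_coeff_geomSum_X_mul _ _

/-- The coefficients of `ℬ_m(q)` are symmetric and unimodal.  Here
`d = N + m²` is the degree of `ℬ_m(q)`. -/
theorem Bpoly_symmetric_unimodal (m : ℕ) :
    ∀ d : ℕ, d = (if Odd m then m ^ 2 - 1 else m ^ 2) + m ^ 2 →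
      (∀ j ≤ d, (Bpoly m).coeff j = (Bpoly m).coeff (d - j)) ∧
      ∃ k ≤ d, (∀ i j, i ≤ j → j ≤ k → (Bpoly m).coeff i ≤ (Bpoly m).coeff j) ∧
        (∀ i j, k ≤ i → i ≤ j → j ≤ d → (Bpoly m).coeff j ≤ (Bpoly m).coeff i) := by
  intro d hd
  have hsymm : ∀ j ≤ d, (Bpoly m).coeff j = (Bpoly m).coeff (d - j) := fun j hj => by
    rw [← revAt_le hj, ← coeff_reflect, hd, reflect_Bpoly]
  refine ⟨hsymm, ?_⟩
  rcases eq_or_ne m 0 with rfl | hm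
  · refine exists_unimodal_of_symm_of_monotoneOn hsymm (K := 0) ?_ (by simp [hd])
    exact Set.Subsingleton.monotoneOn _ fun a ha b hb => by rw [Set.mem_Iic] at ha hb; omega
  · refine exists_unimodal_of_symm_of_monotoneOn hsymm (monotoneOn_coeff_Bpoly hm) ?_
    have : 1 ≤ m ^ 2 := Nat.one_le_pow _ _ (Nat.pos_of_ne_zero hm)
    split_ifs at hd ⊢ <;> omega
end

section
/- For $r \ge 0$, the quantity $p_n(\ell,m,r) = \sum_{\lambda} \binom{v(\lambda)}{r}$, summed over partitions $\lambda$ of $n$ fitting in the $\ell \times m$ rectangle, where $v(\lambda)$ is the number of distinct part sizes of $\lambda$, satisfies the symmetry $p_n(\ell,m,r) = p_{\ell m - n + r}(\ell,m,r)$. -/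
/-- `prCount ℓ m r n = ∑_{λ} C(v(λ), r)` where the sum is over partitions `λ` of `n`
fitting in the `ℓ × m` rectangle and `v(λ)` is the number of distinct part sizes of `λ`
(the number of corners of its Young diagram). -/
def prCount (ℓ m r n : ℕ) : ℕ :=
  ∑ p : {p : n.Partition // p.parts.card ≤ ℓ ∧ ∀ i ∈ p.parts, i ≤ m},
    Nat.choose p.1.parts.toFinset.card r

/-!
Encode a partition `λ` in the `ℓ × m` box by its column lengths `ℓ ≥ α 0 ≥ ⋯ ≥ α (m - 1)`. The
distinct part sizes `j + 1` of `λ` are exactly the columns `j` ending in an inner corner, so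
choosing `r` of them is the same as choosing the shape `π ⊆ α` obtained by deleting those `r`
corners. Hence `p_n(ℓ, m, r)` counts pairs `π ⊆ α` with `|α| = n`, `|π| = n - r` and `α / π` a
set of inner corners of `α`. Taking complements in the box and rotating by 180° sends such a
pair to `(αᶜ, πᶜ)`, a pair of the same kind with `|πᶜ| = ℓm - n + r` and `|αᶜ| = ℓm - n`; on
column lengths this involution is `(π, α) ↦ (rev ∘ α ∘ rev, rev ∘ π ∘ rev)`.
-/

open Finset

namespace Multiset

variable {s : Multiset ℕ} {m : ℕ}

theorem countP_lt_eq_add_count (s : Multiset ℕ) (j : ℕ) :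
    s.countP (j < ·) = s.countP (j + 1 < ·) + s.count (j + 1) := by
  induction s using Multiset.induction_on with
  | empty => simp
  | cons a s ih =>
    rw [countP_cons, countP_cons, count_cons, ih]
    split_ifs <;> omega

theorem antitone_countP_lt (s : Multiset ℕ) : Antitone fun k => s.countP (k < ·) :=
  antitone_nat_of_succ_le fun k => by rw [countP_lt_eq_add_count s k]; exact Nat.le_add_right _ _

theorem countP_lt_eq_zero (hs : ∀ a ∈ s, a ≤ m) {k : ℕ} (hk : m ≤ k) : s.countP (k < ·) = 0 :=
  countP_eq_zero.2 fun a ha => by have := hs a ha; omega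

theorem sum_countP_lt (hs : ∀ a ∈ s, a ≤ m) : ∑ j : Fin m, s.countP ((j : ℕ) < ·) = s.sum := by
  rw [Fin.sum_univ_eq_sum_range (fun j => s.countP (j < ·))]
  induction s using Multiset.induction_on with
  | empty => simp
  | cons a s ih =>
    have ha : a ≤ m := hs a (mem_cons_self a s)
    have hrange : ({j ∈ Finset.range m | j < a} : Finset ℕ) = Finset.range a := by
      ext j; simp only [Finset.mem_filter, Finset.mem_range]; omega
    simp only [countP_cons, sum_cons, sum_add_distrib, sum_boole, hrange, Finset.card_range,
      ih fun b hb => hs b (mem_cons_of_mem hb)]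
    push_cast
    omega

def ofColLens (f : ℕ → ℕ) (m : ℕ) : Multiset ℕ :=
  ∑ j ∈ Finset.range m, replicate (f j - f (j + 1)) (j + 1)

section ofColLens

variable {f : ℕ → ℕ}

theorem mem_ofColLens {a : ℕ} (ha : a ∈ ofColLens f m) : 0 < a ∧ a ≤ m := by
  obtain ⟨j, hj, hmem⟩ := mem_sum.1 ha
  rw [eq_of_mem_replicate hmem]
  have := Finset.mem_range.1 hj
  omega

theorem count_succ_ofColLens (hf : ∀ k, m ≤ k → f k = 0) (k : ℕ) :
    (ofColLens f m).count (k + 1) = f k - f (k + 1) := by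
  simp only [ofColLens, count_sum', count_replicate, add_left_inj, Finset.sum_ite_eq',
    Finset.mem_range]
  split_ifs with hk
  · rfl
  · rw [hf k (not_lt.1 hk), Nat.zero_sub]

theorem countP_lt_ofColLens (hf : Antitone f) (hm : f m = 0) (k : ℕ) :
    (ofColLens f m).countP (k < ·) = f k := by
  have hzero : ∀ k, m ≤ k → f k = 0 := fun k hk => Nat.eq_zero_of_le_zero (hm ▸ hf hk)
  induction hd : m - k generalizing k with
  | zero =>
    rw [hzero k (by omega), countP_eq_zero]
    intro a ha
    have := (mem_ofColLens ha).2
    omega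
  | succ d ih =>
    have hstep := hf (Nat.le_add_right k 1)
    rw [countP_lt_eq_add_count, ih (k + 1) (by omega), count_succ_ofColLens hzero]
    omega

end ofColLens

end Multiset

variable {ℓ m : ℕ}

/-- `α j` is the length of column `j`; at most one cell is deleted per column, and the
interlacing `α j ≤ π i` for `i < j` forces a deleted cell of column `i` to be an inner corner. -/
structure IsCornerSkew (π α : Fin m → Fin (ℓ + 1)) : Prop where
  le : ∀ j, π j ≤ α j
  le_succ : ∀ j, (α j : ℕ) ≤ π j + 1
  interlace : ∀ ⦃i j⦄, i < j → α j ≤ π i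

instance (π α : Fin m → Fin (ℓ + 1)) : Decidable (IsCornerSkew π α) :=
  decidable_of_iff ((∀ j, π j ≤ α j) ∧ (∀ j, (α j : ℕ) ≤ π j + 1) ∧ ∀ i j, i < j → α j ≤ π i)
    ⟨fun ⟨h₁, h₂, h₃⟩ => ⟨h₁, h₂, h₃⟩, fun h => ⟨h.le, h.le_succ, h.interlace⟩⟩

namespace IsCornerSkew

variable {π α : Fin m → Fin (ℓ + 1)}

theorem antitone (h : IsCornerSkew π α) : Antitone α := by
  intro i j hij
  rcases hij.eq_or_lt with rfl | hlt
  · rfl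
  · exact (h.interlace hlt).trans (h.le i)

theorem complement (h : IsCornerSkew π α) :
    IsCornerSkew (fun j => (α j.rev).rev) (fun j => (π j.rev).rev) where
  le j := Fin.rev_le_rev.2 (h.le j.rev)
  le_succ j := by
    have := h.le_succ j.rev
    simp only [Fin.val_rev]
    omega
  interlace i j hij := Fin.rev_le_rev.2 (h.interlace (Fin.rev_lt_rev.2 hij))

end IsCornerSkew

theorem sum_val_rev_comp_rev (f : Fin m → Fin (ℓ + 1)) :
    ∑ j : Fin m, ((f j.rev).rev : ℕ) = ℓ * m - ∑ j, (f j : ℕ) := by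
  have hrev : ∑ j : Fin m, ((f j.rev).rev : ℕ) = ∑ j, ((f j).rev : ℕ) :=
    Fintype.sum_equiv Fin.revPerm _ _ fun j => by simp
  have hadd : ∑ j, ((f j).rev : ℕ) + ∑ j, (f j : ℕ) = ℓ * m := by
    rw [← sum_add_distrib, Fintype.sum_congr _ (fun _ => ℓ) fun j => by
      simp only [Fin.val_rev]; omega]
    simp [mul_comm]
  omega

def cornerPairs (ℓ m a b : ℕ) : Finset ((Fin m → Fin (ℓ + 1)) × (Fin m → Fin (ℓ + 1))) :=
  {x | IsCornerSkew x.1 x.2 ∧ ∑ j, (x.1 j : ℕ) = a ∧ ∑ j, (x.2 j : ℕ) = b}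

theorem mem_cornerPairs {a b : ℕ} {x : (Fin m → Fin (ℓ + 1)) × (Fin m → Fin (ℓ + 1))} :
    x ∈ cornerPairs ℓ m a b ↔
      IsCornerSkew x.1 x.2 ∧ ∑ j, (x.1 j : ℕ) = a ∧ ∑ j, (x.2 j : ℕ) = b := by
  simp [cornerPairs]

def boxComplement (x : (Fin m → Fin (ℓ + 1)) × (Fin m → Fin (ℓ + 1))) :
    (Fin m → Fin (ℓ + 1)) × (Fin m → Fin (ℓ + 1)) :=
  (fun j => (x.2 j.rev).rev, fun j => (x.1 j.rev).rev)

theorem boxComplement_involutive : Function.Involutive (boxComplement (ℓ := ℓ) (m := m)) :=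
  fun x => by simp [boxComplement]

theorem mapsTo_boxComplement (a b : ℕ) :
    Set.MapsTo (boxComplement (ℓ := ℓ) (m := m)) ↑(cornerPairs ℓ m a b)
      ↑(cornerPairs ℓ m (ℓ * m - b) (ℓ * m - a)) :=
  fun x hx => by
    obtain ⟨hskew, ha, hb⟩ := mem_cornerPairs.1 hx
    exact mem_cornerPairs.2 ⟨hskew.complement, hb ▸ sum_val_rev_comp_rev x.2,
      ha ▸ sum_val_rev_comp_rev x.1⟩

theorem card_cornerPairs_complement {a b : ℕ} (ha : a ≤ ℓ * m) (hb : b ≤ ℓ * m) :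
    #(cornerPairs ℓ m a b) = #(cornerPairs ℓ m (ℓ * m - b) (ℓ * m - a)) := by
  have h := mapsTo_boxComplement (ℓ := ℓ) (m := m) (ℓ * m - b) (ℓ * m - a)
  rw [Nat.sub_sub_self ha, Nat.sub_sub_self hb] at h
  exact card_nbij' _ _ (mapsTo_boxComplement a b) h (fun x _ => boxComplement_involutive x)
    (fun x _ => boxComplement_involutive x)

def corners (α : Fin m → Fin (ℓ + 1)) : Finset (Fin m) :=
  {j | 0 < α j ∧ ∀ k, j < k → α k < α j}

theorem mem_corners {α : Fin m → Fin (ℓ + 1)} {j : Fin m} :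
    j ∈ corners α ↔ 0 < α j ∧ ∀ k, j < k → α k < α j := by
  simp [corners]

def removeCorners (α : Fin m → Fin (ℓ + 1)) (D : Finset (Fin m)) : Fin m → Fin (ℓ + 1) :=
  fun j => ⟨α j - if j ∈ D then 1 else 0, by omega⟩

section removeCorners

variable {α : Fin m → Fin (ℓ + 1)} {D : Finset (Fin m)}

theorem val_removeCorners (j : Fin m) :
    (removeCorners α D j : ℕ) = α j - if j ∈ D then 1 else 0 := rfl

theorem isCornerSkew_removeCorners (hα : Antitone α) (hD : D ⊆ corners α) :
    IsCornerSkew (removeCorners α D) α where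
  le j := by rw [Fin.le_def, val_removeCorners]; omega
  le_succ j := by rw [val_removeCorners]; split <;> omega
  interlace i j hij := by
    rw [Fin.le_def, val_removeCorners]
    split
    · have := (mem_corners.1 (hD ‹_›)).2 j hij
      rw [Fin.lt_def] at this
      omega
    · have := hα hij.le
      rw [Fin.le_def] at this
      omega

theorem sum_removeCorners_add_card (hD : D ⊆ corners α) :
    ∑ j, (removeCorners α D j : ℕ) + #D = ∑ j, (α j : ℕ) := by
  have hpos : ∀ j ∈ D, 0 < (α j : ℕ) := fun j hj => (mem_corners.1 (hD hj)).1
  have hcard : #D = ∑ j, if j ∈ D then 1 else 0 := by simp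
  rw [hcard, ← sum_add_distrib]
  refine sum_congr rfl fun j _ => ?_
  rw [val_removeCorners]
  split
  · have := hpos j ‹_›
    omega
  · rfl

theorem filter_lt_removeCorners (hD : D ⊆ corners α) :
    ({j | removeCorners α D j < α j} : Finset (Fin m)) = D := by
  ext j
  simp only [mem_filter, mem_univ, true_and, Fin.lt_def, val_removeCorners]
  split_ifs with hj
  · have := Fin.val_pos_iff.2 (mem_corners.1 (hD hj)).1
    simp only [hj, iff_true]
    omega
  · simp [hj]

end removeCorners

namespace IsCornerSkew

variable {π α : Fin m → Fin (ℓ + 1)}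

theorem filter_lt_subset_corners (h : IsCornerSkew π α) :
    ({j | π j < α j} : Finset (Fin m)) ⊆ corners α := by
  intro j hj
  rw [mem_filter] at hj
  exact mem_corners.2 ⟨(Fin.zero_le _).trans_lt hj.2, fun k hjk => (h.interlace hjk).trans_lt hj.2⟩

theorem removeCorners_filter_lt (h : IsCornerSkew π α) :
    removeCorners α {j | π j < α j} = π := by
  funext j
  have h1 := h.le j
  have h2 := h.le_succ j
  rw [Fin.le_def] at h1
  ext
  simp only [val_removeCorners, mem_filter, mem_univ, true_and, Fin.lt_def]
  split <;> omega

end IsCornerSkew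

theorem card_isCornerSkew_eq_choose {α : Fin m → Fin (ℓ + 1)} (hα : Antitone α) (r : ℕ) :
    #({π | IsCornerSkew π α ∧ ∑ j, (π j : ℕ) + r = ∑ j, (α j : ℕ)} : Finset (Fin m → Fin (ℓ + 1)))
      = (#(corners α)).choose r := by
  rw [← card_powersetCard]
  symm
  refine card_nbij' (removeCorners α) (fun π => ({j | π j < α j} : Finset (Fin m))) ?_ ?_ ?_ ?_
  · intro D hD
    simp only [mem_coe, mem_powersetCard] at hD
    simp only [mem_coe, mem_filter, mem_univ, true_and]
    exact ⟨isCornerSkew_removeCorners hα hD.1, hD.2 ▸ sum_removeCorners_add_card hD.1⟩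
  · intro π hπ
    simp only [mem_coe, mem_filter, mem_univ, true_and] at hπ
    simp only [mem_coe, mem_powersetCard]
    have hsum := sum_removeCorners_add_card hπ.1.filter_lt_subset_corners
    rw [hπ.1.removeCorners_filter_lt] at hsum
    exact ⟨hπ.1.filter_lt_subset_corners, by omega⟩
  · intro D hD
    exact filter_lt_removeCorners (mem_powersetCard.1 hD).1
  · intro π hπ
    simp only [mem_coe, mem_filter, mem_univ, true_and] at hπ
    exact hπ.1.removeCorners_filter_lt

abbrev BoxPartition (ℓ m n : ℕ) := {p : n.Partition // p.parts.card ≤ ℓ ∧ ∀ i ∈ p.parts, i ≤ m}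

namespace BoxPartition

variable {n : ℕ}

def colLens (p : BoxPartition ℓ m n) : Fin m → Fin (ℓ + 1) := fun j =>
  ⟨p.1.parts.countP ((j : ℕ) < ·), Nat.lt_succ_of_le ((Multiset.countP_le_card _ _).trans p.2.1)⟩

theorem val_colLens (p : BoxPartition ℓ m n) (j : Fin m) :
    (p.colLens j : ℕ) = p.1.parts.countP ((j : ℕ) < ·) := rfl

theorem antitone_colLens (p : BoxPartition ℓ m n) : Antitone p.colLens :=
  fun _ _ hij => Fin.le_def.2 (p.1.parts.antitone_countP_lt hij)

theorem sum_colLens (p : BoxPartition ℓ m n) : ∑ j, (p.colLens j : ℕ) = n :=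
  (Multiset.sum_countP_lt p.2.2).trans p.1.parts_sum

theorem countP_lt_eq_of_colLens_eq {p q : BoxPartition ℓ m n} (h : p.colLens = q.colLens)
    (k : ℕ) : p.1.parts.countP (k < ·) = q.1.parts.countP (k < ·) := by
  by_cases hk : k < m
  · exact congrArg Fin.val (congrFun h ⟨k, hk⟩)
  · rw [Multiset.countP_lt_eq_zero p.2.2 (not_lt.1 hk),
      Multiset.countP_lt_eq_zero q.2.2 (not_lt.1 hk)]

theorem colLens_injective : Function.Injective (colLens : BoxPartition ℓ m n → _) := by
  intro p q h
  refine Subtype.ext (Nat.Partition.ext (Multiset.ext.2 fun a => ?_))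
  cases a with
  | zero =>
    rw [Multiset.count_eq_zero_of_notMem fun h0 => (p.1.parts_pos h0).false,
      Multiset.count_eq_zero_of_notMem fun h0 => (q.1.parts_pos h0).false]
  | succ k =>
    have hp := p.1.parts.countP_lt_eq_add_count k
    have hq := q.1.parts.countP_lt_eq_add_count k
    rw [countP_lt_eq_of_colLens_eq h k, countP_lt_eq_of_colLens_eq h (k + 1)] at hp
    omega

theorem mem_corners_colLens (p : BoxPartition ℓ m n) (j : Fin m) :
    j ∈ corners p.colLens ↔ (j : ℕ) + 1 ∈ p.1.parts := by
  have hsplit := p.1.parts.countP_lt_eq_add_count j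
  rw [mem_corners, ← Multiset.count_pos]
  constructor
  · rintro ⟨hpos, hlt⟩
    rw [← Fin.val_pos_iff, val_colLens] at hpos
    by_cases hj : (j : ℕ) + 1 < m
    · have := Fin.lt_def.1 (hlt ⟨j + 1, hj⟩ (Fin.lt_def.2 (Nat.lt_succ_self j)))
      simp only [val_colLens] at this
      omega
    · rw [Multiset.countP_lt_eq_zero p.2.2 (not_lt.1 hj)] at hsplit
      omega
  · intro hcount
    refine ⟨Fin.val_pos_iff.1 (by rw [val_colLens]; omega), fun k hjk => ?_⟩
    have := p.1.parts.antitone_countP_lt (show (j : ℕ) + 1 ≤ k from Fin.lt_def.1 hjk)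
    dsimp only at this
    rw [Fin.lt_def, val_colLens, val_colLens]
    omega

theorem card_corners_colLens (p : BoxPartition ℓ m n) :
    #(corners p.colLens) = #p.1.parts.toFinset := by
  refine card_nbij (fun j => (j : ℕ) + 1) (fun j hj => ?_) (fun i _ j _ h => ?_) (fun a ha => ?_)
  · exact Multiset.mem_toFinset.2 ((mem_corners_colLens p j).1 hj)
  · exact Fin.ext (Nat.succ_injective h)
  · have ha' := Multiset.mem_toFinset.1 ha
    have hpos := p.1.parts_pos ha'
    refine ⟨⟨a - 1, by have := p.2.2 a ha'; omega⟩, (mem_corners_colLens p _).2 ?_, ?_⟩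
    · simpa [Nat.sub_add_cancel hpos] using ha'
    · exact Nat.sub_add_cancel hpos

theorem exists_colLens_eq {α : Fin m → Fin (ℓ + 1)} (hα : Antitone α)
    (hn : ∑ j, (α j : ℕ) = n) : ∃ p : BoxPartition ℓ m n, p.colLens = α := by
  set f : ℕ → ℕ := fun k => if h : k < m then α ⟨k, h⟩ else 0 with hf_def
  have hf : Antitone f := by
    intro i k hik
    simp only [hf_def]
    split_ifs with hk hi hi
    · exact hα (Fin.le_def.2 hik)
    · omega
    · exact Nat.zero_le _
    · exact le_rfl
  have hfm : f m = 0 := dif_neg (lt_irrefl m)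
  have hf_fin : ∀ j : Fin m, f j = α j := fun j => dif_pos j.isLt
  set s := Multiset.ofColLens f m
  have hpos : ∀ a ∈ s, 0 < a := fun a ha => (Multiset.mem_ofColLens ha).1
  have hle : ∀ a ∈ s, a ≤ m := fun a ha => (Multiset.mem_ofColLens ha).2
  have hsum : s.sum = n := by
    rw [← Multiset.sum_countP_lt hle, ← hn]
    exact sum_congr rfl fun j _ => (Multiset.countP_lt_ofColLens hf hfm j).trans (hf_fin j)
  have hcard : Multiset.card s ≤ ℓ := by
    rw [← Multiset.countP_eq_card.2 hpos, Multiset.countP_lt_ofColLens hf hfm]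
    simp only [hf_def]
    split
    · exact Nat.lt_succ_iff.1 (α _).isLt
    · exact Nat.zero_le _
  refine ⟨⟨⟨s, hpos _, hsum⟩, hcard, hle⟩, funext fun j => Fin.ext ?_⟩
  exact (Multiset.countP_lt_ofColLens hf hfm j).trans (hf_fin j)

end BoxPartition

theorem card_filter_snd_cornerPairs {a b r : ℕ} (hab : a + r = b) {α : Fin m → Fin (ℓ + 1)}
    (hα : ∑ j, (α j : ℕ) = b) :
    #{x ∈ cornerPairs ℓ m a b | x.2 = α}
      = #({π | IsCornerSkew π α ∧ ∑ j, (π j : ℕ) + r = ∑ j, (α j : ℕ)} : Finset _) := by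
  refine card_nbij' Prod.fst (fun π => (π, α)) ?_ ?_ ?_ ?_
  · rintro ⟨π, α'⟩ hx
    simp only [coe_filter, mem_cornerPairs, Set.mem_ofPred_eq] at hx
    obtain ⟨⟨hskew, hπ, -⟩, rfl⟩ := hx
    simp only [coe_filter, mem_univ, true_and, Set.mem_ofPred_eq]
    exact ⟨hskew, by omega⟩
  · intro π hπ
    simp only [coe_filter, mem_univ, true_and, Set.mem_ofPred_eq] at hπ
    simp only [coe_filter, mem_cornerPairs, Set.mem_ofPred_eq, and_true]
    exact ⟨hπ.1, by omega, hα⟩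
  · rintro ⟨π, α'⟩ hx
    simp only [coe_filter, Set.mem_ofPred_eq] at hx
    simp [hx.2]
  · intro π _
    rfl

theorem prCount_eq_card_cornerPairs {ℓ m r n : ℕ} (hr : r ≤ n) :
    prCount ℓ m r n = #(cornerPairs ℓ m (n - r) n) := by
  have hmaps : ∀ x ∈ cornerPairs ℓ m (n - r) n,
      x.2 ∈ univ.image (BoxPartition.colLens : BoxPartition ℓ m n → _) := by
    intro x hx
    obtain ⟨hskew, -, hsum⟩ := mem_cornerPairs.1 hx
    obtain ⟨p, hp⟩ := BoxPartition.exists_colLens_eq hskew.antitone hsum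
    exact mem_image.2 ⟨p, mem_univ _, hp⟩
  rw [card_eq_sum_card_fiberwise (f := Prod.snd) fun x hx => hmaps x hx,
    sum_image fun p _ q _ h => BoxPartition.colLens_injective h]
  refine sum_congr rfl fun p _ => ?_
  rw [card_filter_snd_cornerPairs (Nat.sub_add_cancel hr) (BoxPartition.sum_colLens p),
    card_isCornerSkew_eq_choose (BoxPartition.antitone_colLens p),
    BoxPartition.card_corners_colLens]

/-- The symmetry `p_n(ℓ,m,r) = p_{ℓm-n+r}(ℓ,m,r)`. -/
theorem prCount_symmetric (ℓ m r n : ℕ) (hr : r ≤ n) (hn : n ≤ ℓ * m) :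
    prCount ℓ m r n = prCount ℓ m r (ℓ * m - n + r) := by
  rw [prCount_eq_card_cornerPairs hr, prCount_eq_card_cornerPairs (Nat.le_add_left r _),
    Nat.add_sub_cancel, card_cornerPairs_complement ((Nat.sub_le n r).trans hn) hn,
    show ℓ * m - (n - r) = ℓ * m - n + r by omega]
end

section
/- For $m > \ell$, let $d_n(\ell,m)$ be the number of partitions of $n$ into exactly $\ell$ distinct parts, each at most $m$. Then the sequence $d_\ell(\ell,m), d_{\ell+1}(\ell,m), \dots, d_{m\ell}(\ell,m)$ is symmetric and unimodal. Equivalently, the map $\nu \mapsto \nu + (\ell, \ell-1, \dots, 1)$ gives a bijection showing $d_{n + \binom{\ell+1}{2}}(\ell,m) = p_n(\ell, m - \ell)$. -/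
/-!
Symmetry comes from the reflection `i ↦ m + 1 - i` of `{1, …, m}`, and the identity
`d_{n + C(ℓ+1,2)}(ℓ, m) = p_n(ℓ, m - ℓ)` from subtracting the staircase `(1, 2, …, ℓ)` from the
increasingly sorted parts.

Unimodality is Proctor's `sl₂` argument. On the span of the `ℓ`-subsets of `{1, …, m}`, let `X`
move one element `i` to `i + 1` with weight `m - i` and `Y` move one element `j` to `j - 1` with
weight `j - 1`, moves onto an occupied place being dropped: these are the operators that the
`m`-dimensional irreducible representation of `sl₂` induces on its `ℓ`-th exterior power. Their
commutator `XY - YX` acts on the subsets with sum `n` as the scalar `2n - ℓ(m + 1)`. Below the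
middle this scalar is negative, and induction on `n` shows that `YX` then has no eigenvalue `≤ 0`;
so `X` is injective from sum `n` to sum `n + 1`, and `d_n ≤ d_{n+1}`.
-/

/-- `dCount ℓ m n` is the number of partitions of `n` into exactly `ℓ` distinct parts,
each at most `m`. -/
def dCount (ℓ m n : ℕ) : ℕ :=
  Fintype.card {p : n.Partition //
    p.parts.card = ℓ ∧ p.parts.Nodup ∧ ∀ i ∈ p.parts, i ≤ m}

open Finset

def distinctPartSets (ℓ m n : ℕ) : Finset (Finset ℕ) :=
  {S ∈ (Icc 1 m).powersetCard ℓ | ∑ i ∈ S, i = n}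

lemma mem_distinctPartSets {ℓ m n : ℕ} {S : Finset ℕ} :
    S ∈ distinctPartSets ℓ m n ↔ S ⊆ Icc 1 m ∧ #S = ℓ ∧ ∑ i ∈ S, i = n := by
  simp [distinctPartSets, mem_powersetCard, and_assoc]

lemma dCount_eq_card (ℓ m n : ℕ) : dCount ℓ m n = #(distinctPartSets ℓ m n) := by
  rw [dCount, ← Fintype.card_coe]
  exact Fintype.card_congr
    { toFun := fun p => ⟨⟨p.1.parts, p.2.2.1⟩, mem_distinctPartSets.2
        ⟨fun i hi => mem_Icc.2 ⟨p.1.parts_pos hi, p.2.2.2 i hi⟩, p.2.1,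
        (sum_val _).symm.trans p.1.parts_sum⟩⟩
      invFun := fun S =>
        have hS := mem_distinctPartSets.1 S.2
        ⟨⟨S.1.1, fun hi => (mem_Icc.1 (hS.1 hi)).1, (sum_val _).trans hS.2.2⟩,
          hS.2.1, S.1.2, fun i hi => (mem_Icc.1 (hS.1 hi)).2⟩
      left_inv := fun p => rfl
      right_inv := fun S => rfl }

section Reflection

variable {ℓ m n : ℕ}

def reflect (m : ℕ) (S : Finset ℕ) : Finset ℕ := S.image (m + 1 - ·)

lemma reflect_reflect {S : Finset ℕ} (hS : S ⊆ Icc 1 m) : reflect m (reflect m S) = S := by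
  rw [reflect, reflect, image_image]
  refine (image_congr fun i hi => ?_).trans image_id'
  have := mem_Icc.1 (hS hi)
  simp only [Function.comp_apply]
  omega

lemma reflect_mem_distinctPartSets {S : Finset ℕ} (hS : S ∈ distinctPartSets ℓ m n) :
    reflect m S ∈ distinctPartSets ℓ m (ℓ * (m + 1) - n) := by
  obtain ⟨hsub, hcard, hsum⟩ := mem_distinctPartSets.1 hS
  have hinj : Set.InjOn (m + 1 - ·) S := fun i hi j hj hij => by
    have := mem_Icc.1 (hsub hi)
    have := mem_Icc.1 (hsub hj)
    simp only at hij
    omega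
  have hpair : ∑ i ∈ S, ((m + 1 - i) + i) = ℓ * (m + 1) := by
    rw [sum_congr rfl fun i hi => Nat.sub_add_cancel (Nat.le_succ_of_le (mem_Icc.1 (hsub hi)).2),
      sum_const, hcard, smul_eq_mul]
  rw [sum_add_distrib, hsum] at hpair
  refine mem_distinctPartSets.2 ⟨fun j hj => ?_, by rw [reflect, card_image_of_injOn hinj, hcard],
    by rw [reflect, sum_image hinj]; omega⟩
  obtain ⟨i, hi, rfl⟩ := mem_image.1 hj
  have := mem_Icc.1 (hsub hi)
  exact mem_Icc.2 ⟨by omega, by omega⟩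

lemma card_distinctPartSets_reflect (hn : n ≤ ℓ * (m + 1)) :
    #(distinctPartSets ℓ m (ℓ * (m + 1) - n)) = #(distinctPartSets ℓ m n) := by
  refine card_nbij' (reflect m) (reflect m) (fun S hS => ?_) (fun S hS => ?_)
    (fun S hS => reflect_reflect (mem_distinctPartSets.1 hS).1)
    (fun S hS => reflect_reflect (mem_distinctPartSets.1 hS).1)
  · simpa [Nat.sub_sub_self hn] using reflect_mem_distinctPartSets (mem_coe.1 hS)
  · exact reflect_mem_distinctPartSets (mem_coe.1 hS)

end Reflection

section Staircase

def monotoneEquivMultiset (α : Type*) [LinearOrder α] (ℓ : ℕ) :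
    {f : Fin ℓ → α // Monotone f} ≃ {s : Multiset α // Multiset.card s = ℓ} where
  toFun f := ⟨List.ofFn f.1, by simp⟩
  invFun s := ⟨fun i => (s.1.sort (· ≤ ·))[i.1]'(by simp [s.2]),
    fun i j hij => (List.sortedLE_iff_getElem_le_getElem_of_le.1
      (Multiset.pairwise_sort _ _).sortedLE) hij⟩
  left_inv f := by
    ext i
    simp [Multiset.coe_sort, List.mergeSort_eq_self _ (List.sortedLE_ofFn_iff.2 f.2).pairwise]
  right_inv s := by
    have hl : List.ofFn (fun i : Fin ℓ => (s.1.sort (· ≤ ·))[i.1]'(by simp [s.2])) =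
        s.1.sort (· ≤ ·) := List.ext_getElem (by simp [s.2]) (by simp)
    exact Subtype.ext ((congrArg _ hl).trans (Multiset.sort_eq _ _))

lemma Multiset.sum_filter_ne_zero {M : Type*} [AddCommMonoid M] [DecidableEq M]
    (s : Multiset M) : (s.filter (· ≠ 0)).sum = s.sum := by
  conv_rhs => rw [← Multiset.filter_add_not (· ≠ 0) s]
  rw [Multiset.sum_add, Multiset.sum_eq_zero (s := s.filter _)
    (fun x hx => not_not.1 (Multiset.of_mem_filter (p := fun a => ¬a ≠ 0) hx)), add_zero]

def partitionEquivPaddedMultiset (ℓ b n : ℕ) :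
    {p : n.Partition // p.parts.card ≤ ℓ ∧ ∀ i ∈ p.parts, i ≤ b} ≃
    {s : Multiset ℕ // Multiset.card s = ℓ ∧ (∀ i ∈ s, i ≤ b) ∧ s.sum = n} where
  toFun p := ⟨p.1.parts + Multiset.replicate (ℓ - p.1.parts.card) 0, by
    refine ⟨by simp only [Multiset.card_add, Multiset.card_replicate]; omega, ?_, ?_⟩
    · rintro i hi
      rcases Multiset.mem_add.1 hi with hi | hi
      · exact p.2.2 i hi
      · rw [Multiset.eq_of_mem_replicate hi]; exact Nat.zero_le b
    · simp [p.1.parts_sum]⟩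
  invFun s := ⟨⟨s.1.filter (· ≠ 0),
      fun hi => Nat.pos_of_ne_zero (Multiset.of_mem_filter (p := (· ≠ 0)) hi),
      (Multiset.sum_filter_ne_zero s.1).trans s.2.2.2⟩,
    (Multiset.card_le_card (Multiset.filter_le _ _)).trans_eq s.2.1,
    fun i hi => s.2.2.1 i (Multiset.mem_of_mem_filter hi)⟩
  left_inv p := by
    have hzero : (Multiset.replicate (ℓ - p.1.parts.card) 0).filter (· ≠ 0) = 0 :=
      Multiset.filter_eq_nil.2 fun x hx => not_not.2 (Multiset.eq_of_mem_replicate hx)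
    ext1; ext1
    simp only [Multiset.filter_add, hzero, add_zero]
    exact Multiset.filter_eq_self.2 fun x hx => (p.1.parts_pos hx).ne'
  right_inv s := by
    obtain ⟨s, hcard, -, -⟩ := s
    have hsplit := Multiset.filter_add_not (· ≠ 0) s
    simp only [not_not, Multiset.filter_eq' s 0] at hsplit
    have hcount := congrArg Multiset.card hsplit
    rw [Multiset.card_add, Multiset.card_replicate, hcard] at hcount
    ext1
    dsimp only
    rw [show ℓ - (s.filter (· ≠ 0)).card = s.count 0 by omega]
    exact hsplit

lemma add_sub_le_of_strictMono {ℓ : ℕ} {g : Fin ℓ → ℕ} (hg : StrictMono g) {i j : Fin ℓ}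
    (hij : i ≤ j) : g i + ((j : ℕ) - i) ≤ g j := by
  have := card_le_card_of_injOn g (s := Icc i j) (t := Icc (g i) (g j))
    (fun k hk => by
      simp only [coe_Icc, Set.mem_Icc] at hk ⊢
      exact ⟨hg.monotone hk.1, hg.monotone hk.2⟩) hg.injective.injOn
  simp only [Fin.card_Icc, Nat.card_Icc] at this
  omega

lemma sum_val_add_one_eq_choose_two (ℓ : ℕ) : ∑ i : Fin ℓ, ((i : ℕ) + 1) = (ℓ + 1).choose 2 := by
  rw [Fin.sum_univ_eq_sum_range (· + 1), Nat.choose_two_right, ← sum_range_id,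
    sum_range_succ']
  rfl

lemma add_staircase_mem {ℓ b n : ℕ} {f : Fin ℓ → ℕ}
    (hf : Monotone f ∧ (∀ i, f i ≤ b) ∧ ∑ i, f i = n) :
    StrictMono (fun i => f i + (i + 1)) ∧ (∀ i, f i + (i + 1) ∈ Icc 1 (b + ℓ)) ∧
      ∑ i, (f i + (i + 1)) = n + (ℓ + 1).choose 2 := by
  obtain ⟨hmono, hb, hsum⟩ := hf
  refine ⟨fun i j hij => ?_, fun i => mem_Icc.2 ⟨by omega, ?_⟩, ?_⟩
  · have := hmono hij.le
    have : (i : ℕ) < j := hij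
    dsimp only
    omega
  · have := hb i
    have := i.2
    omega
  · rw [sum_add_distrib, hsum, sum_val_add_one_eq_choose_two]

lemma staircase_bounds_of_strictMono {ℓ M : ℕ} {g : Fin ℓ → ℕ} (hg : StrictMono g)
    (hbd : ∀ i, g i ∈ Icc 1 M) (i : Fin ℓ) : (i : ℕ) + 1 ≤ g i ∧ g i + (ℓ - (i + 1)) ≤ M := by
  have hlast : ℓ - 1 < ℓ := by have := i.2; omega
  have h0 := add_sub_le_of_strictMono hg (show ⟨0, i.pos⟩ ≤ i from Nat.zero_le _)
  have h1 := add_sub_le_of_strictMono hg (show i ≤ ⟨ℓ - 1, hlast⟩ from Nat.le_sub_one_of_lt i.2)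
  have := mem_Icc.1 (hbd ⟨0, i.pos⟩)
  have := mem_Icc.1 (hbd ⟨ℓ - 1, hlast⟩)
  dsimp only at h0 h1
  omega

lemma sub_staircase_mem {ℓ b n : ℕ} {g : Fin ℓ → ℕ}
    (hg : StrictMono g ∧ (∀ i, g i ∈ Icc 1 (b + ℓ)) ∧ ∑ i, g i = n + (ℓ + 1).choose 2) :
    Monotone (fun i => g i - (i + 1)) ∧ (∀ i, g i - (i + 1) ≤ b) ∧
      ∑ i, (g i - (i + 1)) = n := by
  obtain ⟨hg, hbd, hsum⟩ := hg
  have hstair := staircase_bounds_of_strictMono hg hbd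
  refine ⟨fun i j hij => ?_, fun i => ?_, ?_⟩
  · have := add_sub_le_of_strictMono hg hij
    have := hstair i
    have : (i : ℕ) ≤ j := hij
    dsimp only
    omega
  · have := hstair i
    omega
  · have : ∑ i, (g i - (i + 1) + (i + 1)) = ∑ i, g i :=
      sum_congr rfl fun i _ => Nat.sub_add_cancel (hstair i).1
    rw [sum_add_distrib, sum_val_add_one_eq_choose_two] at this
    omega

def staircaseEquiv (ℓ b n : ℕ) :
    {f : Fin ℓ → ℕ // Monotone f ∧ (∀ i, f i ≤ b) ∧ ∑ i, f i = n} ≃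
    {g : Fin ℓ → ℕ // StrictMono g ∧ (∀ i, g i ∈ Icc 1 (b + ℓ)) ∧
      ∑ i, g i = n + (ℓ + 1).choose 2} where
  toFun f := ⟨_, add_staircase_mem f.2⟩
  invFun g := ⟨_, sub_staircase_mem g.2⟩
  left_inv f := by ext i; simp
  right_inv g := by
    ext i
    exact Nat.sub_add_cancel (staircase_bounds_of_strictMono g.2.1 g.2.2.1 i).1

def strictMonoEquivDistinctPartSets (ℓ m N : ℕ) :
    {g : Fin ℓ → ℕ // StrictMono g ∧ (∀ i, g i ∈ Icc 1 m) ∧ ∑ i, g i = N} ≃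
    {S // S ∈ distinctPartSets ℓ m N} where
  toFun g := ⟨univ.image g.1, mem_distinctPartSets.2
    ⟨fun x hx => by obtain ⟨i, -, rfl⟩ := mem_image.1 hx; exact g.2.2.1 i,
      by rw [card_image_of_injective _ g.2.1.injective, card_univ, Fintype.card_fin],
      by rw [sum_image fun i _ j _ hij => g.2.1.injective hij]; exact g.2.2.2⟩⟩
  invFun S :=
    have hS := mem_distinctPartSets.1 S.2
    ⟨S.1.orderEmbOfFin hS.2.1, (S.1.orderEmbOfFin hS.2.1).strictMono,
      fun i => hS.1 (S.1.orderEmbOfFin_mem hS.2.1 i), by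
        have := sum_image (f := fun x => x) (s := univ)
          fun i _ j _ hij => (S.1.orderEmbOfFin hS.2.1).injective hij
        rw [image_orderEmbOfFin_univ] at this
        exact this.symm.trans hS.2.2⟩
  left_inv g := Subtype.ext (orderEmbOfFin_unique _
    (fun i => mem_image_of_mem g.1 (mem_univ i)) g.2.1).symm
  right_inv S := Subtype.ext (image_orderEmbOfFin_univ _ _)

lemma pCount_eq_card_distinctPartSets (ℓ b n : ℕ) :
    pCount ℓ b n = #(distinctPartSets ℓ (b + ℓ) (n + (ℓ + 1).choose 2)) := by
  have sortEquiv : {f : Fin ℓ → ℕ // Monotone f ∧ (∀ i, f i ≤ b) ∧ ∑ i, f i = n} ≃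
      {s : Multiset ℕ // Multiset.card s = ℓ ∧ (∀ i ∈ s, i ≤ b) ∧ s.sum = n} :=
    (Equiv.subtypeSubtypeEquivSubtypeInter _ _).symm.trans <|
      (Equiv.subtypeEquiv (monotoneEquivMultiset ℕ ℓ) fun f => by
        simp [monotoneEquivMultiset, List.sum_ofFn]).trans
        (Equiv.subtypeSubtypeEquivSubtypeInter _ _)
  rw [pCount, ← Fintype.card_coe]
  exact Fintype.card_congr <| (partitionEquivPaddedMultiset ℓ b n).trans <| sortEquiv.symm.trans <|
    (staircaseEquiv ℓ b n).trans (strictMonoEquivDistinctPartSets ℓ (b + ℓ) _)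

end Staircase

section Sl2

variable {K V : Type*} [Field K] [LinearOrder K] [IsStrictOrderedRing K] [AddCommGroup V]
  [Module K V] {X Y : V →ₗ[K] V} {L : ℕ → Submodule K V} {c : ℕ → K}

lemma eq_zero_of_lower_raise_eq_smul (hY : ∀ n, ∀ v ∈ L (n + 1), Y v ∈ L n)
    (hY₀ : ∀ v ∈ L 0, Y v = 0) (hXY : ∀ n, ∀ v ∈ L n, X (Y v) - Y (X v) = c n • v) {n : ℕ}
    (hc : ∀ k ≤ n, c k < 0) {μ : K} (hμ : μ ≤ 0) {v : V} (hv : v ∈ L n)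
    (hv' : Y (X v) = μ • v) : v = 0 := by
  induction n using Nat.strong_induction_on generalizing μ v with
  | _ n ih =>
    have hneg : μ + c n < 0 := by linarith [hc n le_rfl]
    have hXYv : X (Y v) = (μ + c n) • v := by rw [add_smul, ← hv', ← hXY n v hv]; abel
    suffices hYv : Y v = 0 by
      rw [hYv, map_zero, eq_comm, smul_eq_zero] at hXYv
      exact hXYv.resolve_left hneg.ne
    cases n with
    | zero => exact hY₀ v hv
    | succ n =>
      exact ih n n.lt_succ_self (fun k hk => hc k (by omega)) hneg.le (hY n v hv)
        (by rw [← map_smul, ← hXYv])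

lemma finrank_le_finrank_succ_of_commutator_neg (hX : ∀ n, ∀ v ∈ L n, X v ∈ L (n + 1))
    (hY : ∀ n, ∀ v ∈ L (n + 1), Y v ∈ L n) (hY₀ : ∀ v ∈ L 0, Y v = 0)
    (hXY : ∀ n, ∀ v ∈ L n, X (Y v) - Y (X v) = c n • v) {n : ℕ} (hc : ∀ k ≤ n, c k < 0)
    [FiniteDimensional K (L (n + 1))] :
    Module.finrank K (L n) ≤ Module.finrank K (L (n + 1)) := by
  refine LinearMap.finrank_le_finrank_of_injective (f := X.restrict (hX n)) ?_
  rw [← LinearMap.ker_eq_bot, Submodule.eq_bot_iff]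
  rintro ⟨v, hv⟩ hXv
  have hXv : X v = 0 := congrArg Subtype.val hXv
  exact Subtype.ext (eq_zero_of_lower_raise_eq_smul hY hY₀ hXY hc le_rfl hv
    (by rw [hXv, map_zero, zero_smul]))

end Sl2

lemma sum_ite_pred_sub_sum_ite_succ {M : Type*} [AddCommGroup M] {S : Finset ℕ} (h0 : 0 ∉ S)
    (g : ℕ → M) :
    (∑ j ∈ S, if j - 1 ∈ S then 0 else g (j - 1)) - (∑ i ∈ S, if i + 1 ∈ S then 0 else g i) =
      ∑ j ∈ S, (g (j - 1) - g j) := by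
  have hpos : ∀ j ∈ S, 1 ≤ j := fun j hj => Nat.one_le_iff_ne_zero.2 (by rintro rfl; exact h0 hj)
  have hpairs : ∑ j ∈ S with j - 1 ∈ S, g (j - 1) = ∑ i ∈ S with i + 1 ∈ S, g i := by
    refine sum_nbij' (· - 1) (· + 1) ?_ ?_ ?_ ?_ (fun _ _ => rfl)
    all_goals intro x hx; simp only [mem_filter] at hx ⊢
    · exact ⟨hx.2, by rw [Nat.sub_add_cancel (hpos x hx.1)]; exact hx.1⟩
    · exact ⟨hx.2, hx.1⟩
    · exact Nat.sub_add_cancel (hpos x hx.1)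
    · rfl
  rw [sum_sub_distrib, ← sum_filter_add_sum_filter_not S (· - 1 ∈ S) (fun j => g (j - 1)),
    ← sum_filter_add_sum_filter_not S (· + 1 ∈ S) g, sum_ite, sum_ite, sum_const_zero,
    sum_const_zero, hpairs]
  abel

section Shift

variable {R : Type*} [Semiring R]

def move (S : Finset ℕ) (i k : ℕ) : Finset ℕ := insert k (S.erase i)

lemma move_move_self {S : Finset ℕ} {i k : ℕ} (hi : i ∈ S) (hk : k ∉ S) :
    move (move S i k) k i = S := by
  rw [move, move, erase_insert (fun h => hk (mem_of_mem_erase h)), insert_erase hi]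

lemma move_move_comm {S : Finset ℕ} {i j i' j' : ℕ} (hi : i ∈ S) (hj : j ∈ S)
    (hi' : i' ∉ S) (hj' : j' ∉ S) :
    move (move S j j') i i' = move (move S i i') j j' := by
  ext x; simp only [move, mem_insert, mem_erase]; grind

variable (R) in
noncomputable def shiftVec (σ : ℕ → ℕ) (w : ℕ → R) (S : Finset ℕ) : Finset ℕ →₀ R :=
  ∑ i ∈ S, if σ i ∈ S then 0 else Finsupp.single (move S i (σ i)) (w i)

variable (R) in
noncomputable def shiftOp (σ : ℕ → ℕ) (w : ℕ → R) : (Finset ℕ →₀ R) →ₗ[R] (Finset ℕ →₀ R) :=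
  Finsupp.linearCombination R (shiftVec R σ w)

lemma shiftOp_single (σ : ℕ → ℕ) (w : ℕ → R) (S : Finset ℕ) (c : R) :
    shiftOp R σ w (Finsupp.single S c) = c • shiftVec R σ w S :=
  Finsupp.linearCombination_single R c S

lemma shiftVec_move (σ τ : ℕ → ℕ) (w : ℕ → R) {S : Finset ℕ} {i : ℕ} (hi : i ∈ S)
    (hσi : σ i ∉ S) (hτσ : τ (σ i) = i) :
    shiftVec R τ w (move S i (σ i)) = Finsupp.single S (w (σ i)) +
      ∑ j ∈ S.erase i, if τ j ∈ move S i (σ i) then 0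
        else Finsupp.single (move (move S i (σ i)) j (τ j)) (w j) := by
  have hσi' : σ i ∉ S.erase i := fun h => hσi (mem_of_mem_erase h)
  have hi' : i ∉ move S i (σ i) := by
    simp only [move, mem_insert, mem_erase, ne_eq, not_true_eq_false, false_and, or_false]
    rintro h; exact hσi (h ▸ hi)
  rw [shiftVec, move, sum_insert hσi', hτσ, ← move, if_neg hi', move_move_self hi hσi]

lemma shiftOp_mem_supported {σ : ℕ → ℕ} {w : ℕ → R}
    {s t : Set (Finset ℕ)}
    (h : ∀ S ∈ s, ∀ i ∈ S, σ i ∉ S → w i = 0 ∨ move S i (σ i) ∈ t) :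
    ∀ v ∈ Finsupp.supported R R s, shiftOp R σ w v ∈ Finsupp.supported R R t := by
  suffices Finsupp.supported R R s ≤ (Finsupp.supported R R t).comap (shiftOp R σ w) from
    fun v hv => this hv
  rw [Finsupp.supported_eq_span_single, Submodule.span_le]
  rintro _ ⟨S, hS, rfl⟩
  rw [SetLike.mem_coe, Submodule.mem_comap, shiftOp_single, one_smul, shiftVec]
  refine Submodule.sum_mem _ fun i hi => ?_
  split_ifs with hσi
  · exact Submodule.zero_mem _
  · rcases h S hS i hi hσi with hw | hmem
    · rw [hw, Finsupp.single_zero]; exact Submodule.zero_mem _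
    · exact Finsupp.single_mem_supported R _ hmem

lemma shiftOp_shiftVec (σ τ : ℕ → ℕ) (a b : ℕ → R) {S : Finset ℕ}
    (hτσ : ∀ i ∈ S, σ i ∉ S → τ (σ i) = i) :
    shiftOp R τ a (shiftVec R σ b S) =
      Finsupp.single S (∑ i ∈ S, if σ i ∈ S then 0 else b i * a (σ i)) +
      ∑ i ∈ S, ∑ j ∈ S.erase i, (if σ i ∈ S then 0 else b i • if τ j ∈ move S i (σ i) then 0
        else Finsupp.single (move (move S i (σ i)) j (τ j)) (a j)) := by
  rw [shiftVec, map_sum, Finsupp.single_finsetSum, ← sum_add_distrib]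
  refine sum_congr rfl fun i hi => ?_
  split_ifs with hσi
  · simp
  · rw [shiftOp_single, shiftVec_move σ τ a hi hσi (hτσ i hi hσi), smul_add, Finsupp.smul_single,
      smul_eq_mul, smul_sum]

end Shift

-- Moving `j` down and then `i` up, or the other way round, gives the same subset with the same
-- weight, and one order is blocked exactly when the other is: the off-diagonal terms of `XY`
-- and `YX` cancel.
lemma raise_lower_offDiag_comm {R : Type*} [CommSemiring R] (a b : ℕ → R) {S : Finset ℕ} {i j : ℕ}
    (hi : i ∈ S) (hj : j ∈ S) (hij : i ≠ j) :
    (if j - 1 ∈ S then 0 else b j • if i + 1 ∈ move S j (j - 1) then 0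
      else Finsupp.single (move (move S j (j - 1)) i (i + 1)) (a i)) =
    (if i + 1 ∈ S then 0 else a i • if j - 1 ∈ move S i (i + 1) then 0
      else Finsupp.single (move (move S i (i + 1)) j (j - 1)) (b j)) := by
  have hmoves :
      (j - 1 ∉ S ∧ i + 1 ∉ move S j (j - 1)) ↔ (i + 1 ∉ S ∧ j - 1 ∉ move S i (i + 1)) := by
    simp only [move, mem_insert, mem_erase]
    grind
  by_cases h : j - 1 ∉ S ∧ i + 1 ∉ move S j (j - 1)
  · obtain ⟨hi', hj'⟩ := hmoves.1 h
    rw [if_neg h.1, if_neg h.2, if_neg hi', if_neg hj', Finsupp.smul_single, Finsupp.smul_single,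
      smul_eq_mul, smul_eq_mul, mul_comm, move_move_comm hi hj hi' h.1]
  · have h' := mt hmoves.2 h
    simp only [not_and_or, not_not] at h h'
    rcases h with h | h <;> rcases h' with h' | h' <;> simp [h, h']

lemma shiftOp_commutator_single {R : Type*} [CommRing R] (a b : ℕ → R) {S : Finset ℕ}
    (h0 : 0 ∉ S) :
    shiftOp R (· + 1) a (shiftOp R (· - 1) b (Finsupp.single S 1)) -
      shiftOp R (· - 1) b (shiftOp R (· + 1) a (Finsupp.single S 1)) =
      Finsupp.single S (∑ j ∈ S, (a (j - 1) * b j - a j * b (j + 1))) := by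
  have hpred : ∀ j ∈ S, j - 1 + 1 = j := fun j hj =>
    Nat.sub_add_cancel (Nat.one_le_iff_ne_zero.2 (by rintro rfl; exact h0 hj))
  rw [shiftOp_single, shiftOp_single, one_smul, one_smul,
    shiftOp_shiftVec (· - 1) (· + 1) a b fun j hj _ => hpred j hj,
    shiftOp_shiftVec (· + 1) (· - 1) b a fun _ _ _ => rfl,
    sum_comm' (s' := fun i => S.erase i) (t' := S) (fun j i => by simp only [mem_erase]; tauto),
    sum_congr rfl fun i hi => sum_congr rfl fun j hj =>
      raise_lower_offDiag_comm a b hi (mem_erase.1 hj).2 (mem_erase.1 hj).1.symm,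
    add_sub_add_right_eq_sub, ← Finsupp.single_sub]
  have hdiag : ∑ j ∈ S, (if j - 1 ∈ S then 0 else b j * a (j - 1)) =
      ∑ j ∈ S, if j - 1 ∈ S then 0 else a (j - 1) * b (j - 1 + 1) :=
    sum_congr rfl fun j hj => by rw [hpred j hj, mul_comm]
  rw [hdiag, sum_ite_pred_sub_sum_ite_succ h0 fun i => a i * b (i + 1)]
  exact congrArg _ (sum_congr rfl fun j hj => by rw [hpred j hj])

section Unimodality

variable {ℓ m n : ℕ}

noncomputable abbrev levelSpace (ℓ m n : ℕ) : Submodule ℚ (Finset ℕ →₀ ℚ) :=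
  Finsupp.supported ℚ ℚ (distinctPartSets ℓ m n : Set (Finset ℕ))

-- The weights vanish on the moves `m → m + 1` and `1 → 0`, which would leave `{1, …, m}`.
noncomputable abbrev raiseOp (m : ℕ) : (Finset ℕ →₀ ℚ) →ₗ[ℚ] (Finset ℕ →₀ ℚ) :=
  shiftOp ℚ (· + 1) fun i => (m : ℚ) - i

noncomputable abbrev lowerOp : (Finset ℕ →₀ ℚ) →ₗ[ℚ] (Finset ℕ →₀ ℚ) :=
  shiftOp ℚ (· - 1) fun j => (j : ℚ) - 1

lemma move_mem_distinctPartSets {S : Finset ℕ} (hS : S ∈ distinctPartSets ℓ m n) {i k : ℕ}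
    (hi : i ∈ S) (hk : k ∉ S) (hkm : k ∈ Icc 1 m) :
    move S i k ∈ distinctPartSets ℓ m (n + k - i) := by
  obtain ⟨hsub, hcard, hsum⟩ := mem_distinctPartSets.1 hS
  have hk' : k ∉ S.erase i := fun h => hk (mem_of_mem_erase h)
  refine mem_distinctPartSets.2 ⟨insert_subset hkm ((erase_subset i S).trans hsub), ?_, ?_⟩
  · rw [move, card_insert_of_notMem hk', card_erase_add_one hi, hcard]
  · rw [move, sum_insert hk', ← hsum, ← add_sum_erase S _ hi]
    omega

lemma raiseOp_mem_levelSpace : ∀ v ∈ levelSpace ℓ m n, raiseOp m v ∈ levelSpace ℓ m (n + 1) :=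
  shiftOp_mem_supported fun S hS i hi hi' => by
    rcases (mem_Icc.1 ((mem_distinctPartSets.1 hS).1 hi)).2.eq_or_lt with rfl | him
    · exact Or.inl (sub_self _)
    · have := move_mem_distinctPartSets hS hi hi' (mem_Icc.2 ⟨by omega, him⟩)
      exact Or.inr (by rwa [show n + (i + 1) - i = n + 1 by omega] at this)

lemma lowerOp_mem_levelSpace : ∀ v ∈ levelSpace ℓ m (n + 1), lowerOp v ∈ levelSpace ℓ m n :=
  shiftOp_mem_supported fun S hS j hj hj' => by
    have hjm := mem_Icc.1 ((mem_distinctPartSets.1 hS).1 hj)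
    rcases hjm.1.eq_or_lt with rfl | hj1
    · exact Or.inl (by simp)
    · have := move_mem_distinctPartSets hS hj hj' (mem_Icc.2 ⟨by omega, by omega⟩)
      exact Or.inr (by rwa [show n + 1 + (j - 1) - j = n by omega] at this)

lemma lowerOp_levelSpace_zero : ∀ v ∈ levelSpace ℓ m 0, lowerOp v = 0 := by
  intro v hv
  have hmem := shiftOp_mem_supported (σ := (· - 1)) (w := fun j => (j : ℚ) - 1) (t := ∅)
    (fun S hS j hj _ => by
      obtain ⟨hsub, -, hsum⟩ := mem_distinctPartSets.1 hS
      have := single_le_sum (fun j _ => Nat.zero_le j) hj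
      have := (mem_Icc.1 (hsub hj)).1
      omega) v hv
  rwa [Finsupp.supported_empty, Submodule.mem_bot] at hmem

lemma sum_commutator_weights {S : Finset ℕ} (hS : S ∈ distinctPartSets ℓ m n) :
    ∑ j ∈ S, (((m : ℚ) - ↑(j - 1)) * (↑j - 1) - ((m : ℚ) - ↑j) * (↑(j + 1) - 1)) =
      2 * n - ℓ * (m + 1) := by
  obtain ⟨hsub, hcard, hsum⟩ := mem_distinctPartSets.1 hS
  calc _ = ∑ j ∈ S, (2 * (j : ℚ) - (m + 1)) := sum_congr rfl fun j hj => by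
          rw [Nat.cast_sub (mem_Icc.1 (hsub hj)).1]; push_cast; ring
    _ = _ := by
      rw [sum_sub_distrib, ← mul_sum, sum_const, hcard, nsmul_eq_mul, ← hsum]
      push_cast
      ring

lemma raiseOp_lowerOp_sub_lowerOp_raiseOp : ∀ v ∈ levelSpace ℓ m n,
    raiseOp m (lowerOp v) - lowerOp (raiseOp m v) = ((2 * n - ℓ * (m + 1) : ℚ)) • v := by
  intro v hv
  let φ := raiseOp m ∘ₗ lowerOp - lowerOp ∘ₗ raiseOp m -
    (2 * n - ℓ * (m + 1) : ℚ) • LinearMap.id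
  suffices levelSpace ℓ m n ≤ LinearMap.ker φ by
    simpa [φ, sub_eq_zero] using this hv
  rw [levelSpace, Finsupp.supported_eq_span_single, Submodule.span_le]
  rintro _ ⟨S, hS, rfl⟩
  have h0 : 0 ∉ S := fun h => by
    have := (mem_Icc.1 ((mem_distinctPartSets.1 hS).1 h)).1
    omega
  simp only [SetLike.mem_coe, LinearMap.mem_ker, φ, LinearMap.sub_apply, LinearMap.comp_apply,
    LinearMap.smul_apply, LinearMap.id_apply]
  rw [shiftOp_commutator_single _ _ h0, sum_commutator_weights hS, Finsupp.smul_single_one,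
    sub_self]

instance (ℓ m n : ℕ) : FiniteDimensional ℚ (levelSpace ℓ m n) :=
  Module.Finite.equiv (Finsupp.supportedEquivFinsupp _).symm

lemma finrank_levelSpace : Module.finrank ℚ (levelSpace ℓ m n) = #(distinctPartSets ℓ m n) := by
  rw [(Finsupp.supportedEquivFinsupp _).finrank_eq, Module.finrank_finsupp_self]
  exact Fintype.card_coe _

lemma card_distinctPartSets_le_succ (hn : 2 * n < ℓ * (m + 1)) :
    #(distinctPartSets ℓ m n) ≤ #(distinctPartSets ℓ m (n + 1)) := by
  rw [← finrank_levelSpace, ← finrank_levelSpace]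
  exact finrank_le_finrank_succ_of_commutator_neg (X := raiseOp m) (Y := lowerOp)
    (L := levelSpace ℓ m) (c := fun k : ℕ => (2 * k - ℓ * (m + 1) : ℚ))
    (fun _ => raiseOp_mem_levelSpace) (fun _ => lowerOp_mem_levelSpace) lowerOp_levelSpace_zero
    (fun _ => raiseOp_lowerOp_sub_lowerOp_raiseOp)
    fun k hk => sub_neg.2 (by exact_mod_cast (show 2 * k < ℓ * (m + 1) by omega))

lemma card_distinctPartSets_mono {i j : ℕ} (hij : i ≤ j) (hj : 2 * j ≤ ℓ * (m + 1) + 1) :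
    #(distinctPartSets ℓ m i) ≤ #(distinctPartSets ℓ m j) := by
  induction j, hij using Nat.le_induction with
  | base => exact le_rfl
  | succ j hij ih => exact (ih (by omega)).trans (card_distinctPartSets_le_succ (by omega))

end Unimodality

/-- For `m > ℓ`, the sequence `d_ℓ(ℓ,m), d_{ℓ+1}(ℓ,m), …, d_{mℓ}(ℓ,m)` is symmetric and
unimodal; moreover the bijection `ν ↦ ν + (ℓ, ℓ-1, …, 1)` shows
`d_{n + C(ℓ+1,2)}(ℓ,m) = p_n(ℓ, m-ℓ)`. -/
theorem dCount_symmetric_unimodal (ℓ m : ℕ) (h : ℓ < m) :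
    (∀ n, ℓ ≤ n → n ≤ m * ℓ → dCount ℓ m n = dCount ℓ m (m * ℓ + ℓ - n)) ∧
    (∃ k, (∀ i j, ℓ ≤ i → i ≤ j → j ≤ k → j ≤ m * ℓ → dCount ℓ m i ≤ dCount ℓ m j) ∧
          (∀ i j, k ≤ i → ℓ ≤ i → i ≤ j → j ≤ m * ℓ → dCount ℓ m j ≤ dCount ℓ m i)) ∧
    (∀ n, dCount ℓ m (n + Nat.choose (ℓ + 1) 2) = pCount ℓ (m - ℓ) n) := by
  have hN : m * ℓ + ℓ = ℓ * (m + 1) := by ring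
  simp only [dCount_eq_card, hN]
  refine ⟨fun n _ hn => (card_distinctPartSets_reflect (by omega)).symm,
    ⟨ℓ * (m + 1) / 2, fun i j _ hij hj _ => card_distinctPartSets_mono hij (by omega),
      fun i j hi _ hij hj => ?_⟩, fun n => ?_⟩
  · rw [← card_distinctPartSets_reflect (n := i) (by omega),
      ← card_distinctPartSets_reflect (n := j) (by omega)]
    exact card_distinctPartSets_mono (by omega) (by omega)
  · rw [pCount_eq_card_distinctPartSets, Nat.sub_add_cancel h.le]
end
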